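/- arXiv:1609.02122 — 3 statements merged into one kernel-verified Lean document; each statement's English description precedes it below -/
import Mathlib

section
/- Let M ≥ 1. For all integers n ≥ 1 and j ≥ 1, the periodic sequence (λ_1…λ_{2^n}(\overline{λ_1…λ_{2^n}}⁺)^j \overline{λ_1…λ_{2^n}})^∞ is *-irreducible. -/
namespace Paper

/-- A digit sequence over the alphabet `{0,…,M}` (0-indexed: `x 0` is the digit `x_1`). -/
def IsSeq (M : ℕ) (x : ℕ → ℕ) : Prop := ∀ i, x i ≤ M

/-- The `n`-fold left shift `σ^n`. -/
def shiftn (n : ℕ) (x : ℕ → ℕ) : ℕ → ℕ := fun i => x (i + n)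

/-- Reflection of a sequence: `x̄ = (M - x_i)_i`. -/
def reflectSeq (M : ℕ) (x : ℕ → ℕ) : ℕ → ℕ := fun i => M - x i

/-- Strict lexicographic order on sequences. -/
def SeqLt (x y : ℕ → ℕ) : Prop := ∃ n, (∀ i < n, x i = y i) ∧ x n < y n

/-- Lexicographic order on sequences. -/
def SeqLe (x y : ℕ → ℕ) : Prop := SeqLt x y ∨ x = y

/-- Reflection of a word. -/
def reflectWord (M : ℕ) (w : List ℕ) : List ℕ := w.map (fun d => M - d)

/-- `w⁻`: decrement the last letter of a word. -/
def wordMinus (w : List ℕ) : List ℕ := w.dropLast ++ [w.getLastD 0 - 1]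

/-- `w⁺`: increment the last letter of a word. -/
def wordPlus (w : List ℕ) : List ℕ := w.dropLast ++ [w.getLastD 0 + 1]

/-- The periodic sequence `w^∞`. -/
def per (w : List ℕ) : ℕ → ℕ := fun i => w.getD (i % w.length) 0

/-- The sequence starting with the word `w` followed by the sequence `x`. -/
def wordThen (w : List ℕ) (x : ℕ → ℕ) : ℕ → ℕ :=
  fun i => if i < w.length then w.getD i 0 else x (i - w.length)

/-- The factor `x_{i+1} … x_{i+n}` of a sequence (0-indexed start `i`, length `n`). -/
def factor (x : ℕ → ℕ) (i n : ℕ) : List ℕ := (List.range n).map (fun j => x (i + j))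

/-- The prefix `x_1 … x_n` of a sequence. -/
def pre (x : ℕ → ℕ) (n : ℕ) : List ℕ := factor x 0 n

/-- The set `𝐕` of sequences `a` with `ā ≼ σⁿ(a) ≼ a` for all `n ≥ 0`. -/
def Vset (M : ℕ) : Set (ℕ → ℕ) :=
  {a | IsSeq M a ∧ ∀ n, SeqLe (reflectSeq M a) (shiftn n a) ∧ SeqLe (shiftn n a) a}

/-- The subshift `V_α` of sequences `x` with `ᾱ ≼ σⁿ(x) ≼ α` for all `n ≥ 0`. -/
def Vsub (M : ℕ) (α : ℕ → ℕ) : Set (ℕ → ℕ) :=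
  {x | IsSeq M x ∧ ∀ n, SeqLe (reflectSeq M α) (shiftn n x) ∧ SeqLe (shiftn n x) α}

/-- `B_n(X)`: the words of length `n` occurring as factors of elements of `X`. -/
def Bn (n : ℕ) (X : Set (ℕ → ℕ)) : Set (List ℕ) :=
  {w | w.length = n ∧ ∃ x ∈ X, ∃ i, w = factor x i n}

/-- The language of `X`: all factors of elements of `X`. -/
def Lang (X : Set (ℕ → ℕ)) : Set (List ℕ) :=
  {w | ∃ x ∈ X, ∃ i, w = factor x i w.length}

/-- Topological transitivity: any two nonempty factors can be connected within the language. -/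
def TopTransitive (X : Set (ℕ → ℕ)) : Prop :=
  ∀ u v, u ∈ Lang X → v ∈ Lang X → u ≠ [] → v ≠ [] → ∃ w, (u ++ w ++ v) ∈ Lang X

/-- Strict lexicographic order on words (intended for words of equal length). -/
def WordLt (u v : List ℕ) : Prop := List.Lex (· < ·) u v

/-- Lexicographic order on words (intended for words of equal length). -/
def WordLe (u v : List ℕ) : Prop := WordLt u v ∨ u = v

/-- Irreducible sequence: `a ∈ 𝐕` and `a_1…a_j (\overline{a_1…a_j}⁺)^∞ ≺ a` for every `j ≥ 1`
with `a_j ≥ 1` such that `(a_1…a_j⁻)^∞ ∈ 𝐕`. -/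
def IrrSeq (M : ℕ) (a : ℕ → ℕ) : Prop :=
  a ∈ Vset M ∧ ∀ j, 1 ≤ j → 1 ≤ a (j - 1) → per (wordMinus (pre a j)) ∈ Vset M →
    SeqLt (wordThen (pre a j) (per (wordPlus (reflectWord M (pre a j))))) a

/-- The Thue–Morse sequence: `tau i` is the parity of the number of `1`s in the binary
expansion of `i`. -/
def tau (i : ℕ) : ℕ := (Nat.digits 2 i).sum % 2

/-- The generalized Thue–Morse sequence `λ` (0-indexed: `lam M i = λ_{i+1}`);
`λ_i = k + τ_i - τ_{i-1}` if `M = 2k`, and `λ_i = k + τ_i` if `M = 2k+1`. -/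
def lam (M : ℕ) (i : ℕ) : ℕ :=
  if M % 2 = 0 then (M / 2 + tau (i + 1)) - tau i else M / 2 + tau (i + 1)

/-- The word `λ_1 … λ_L`. -/
def lamWord (M L : ℕ) : List ℕ := (List.range L).map (lam M)

/-- `2^(n-1)` if `M` is even, `2^n` if `M` is odd. -/
def xiLen (M n : ℕ) : ℕ := if M % 2 = 0 then 2 ^ (n - 1) else 2 ^ n

/-- The sequence `ξ(n)`. -/
def xi (M n : ℕ) : ℕ → ℕ :=
  wordThen (lamWord M (xiLen M n)) (per (wordPlus (reflectWord M (lamWord M (xiLen M n)))))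

/-- `2^n` if `M` is even, `2^(n+1)` if `M` is odd. -/
def starThreshold (M n : ℕ) : ℕ := if M % 2 = 0 then 2 ^ n else 2 ^ (n + 1)

/-- `*`-irreducible sequence. -/
def StarIrrSeq (M : ℕ) (a : ℕ → ℕ) : Prop :=
  a ∈ Vset M ∧ ∃ n, 1 ≤ n ∧ SeqLe (xi M (n + 1)) a ∧ SeqLt a (xi M n) ∧
    ∀ j, 1 ≤ a (j - 1) → per (wordMinus (pre a j)) ∈ Vset M → starThreshold M n < j →
      SeqLt (wordThen (pre a j) (per (wordPlus (reflectWord M (pre a j))))) a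

/-- The projection `π_q(x) = ∑_{i ≥ 1} x_i q^{-i}`. -/
noncomputable def piBase (q : ℝ) (x : ℕ → ℕ) : ℝ := ∑' i : ℕ, (x i : ℝ) / q ^ (i + 1)

/-- The set `𝐔_q` of sequences that are the unique expansion of their projection. -/
def Uset (M : ℕ) (q : ℝ) : Set (ℕ → ℕ) :=
  {a | IsSeq M a ∧ ∀ b, IsSeq M b → piBase q b = piBase q a → b = a}

/-- The entropy function `H(q) = limsup_n (log #B_n(𝐔_q))/n`. -/
noncomputable def entropy (M : ℕ) (q : ℝ) : ℝ :=
  Filter.limsup (fun n : ℕ => Real.log ((Bn n (Uset M q)).ncard) / (n : ℝ)) Filter.atTop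

/-- `α` is the quasi-greedy expansion of `1` in base `q`. -/
def QuasiGreedy (M : ℕ) (q : ℝ) (α : ℕ → ℕ) : Prop :=
  IsSeq M α ∧ piBase q α = 1 ∧ {n | α n ≠ 0}.Infinite ∧
    ∀ n, 1 ≤ n → α (n - 1) < M → SeqLe (shiftn n α) α

/-- The univoque set `𝒰_q ⊆ ℝ`. -/
def univoqueSet (M : ℕ) (q : ℝ) : Set ℝ :=
  {x | ∃! a : ℕ → ℕ, IsSeq M a ∧ piBase q a = x}

/-- The bifurcation set `E` of the entropy function. -/
def Eset (M : ℕ) : Set ℝ :=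
  {q | q ∈ Set.Ioc 1 (M + 1 : ℝ) ∧ ∀ ε : ℝ, 0 < ε →
    ∃ p ∈ Set.Ioo (q - ε) (q + ε) ∩ Set.Ioc 1 (M + 1 : ℝ), entropy M p ≠ entropy M q}

/-- `[pL, pR]` is an irreducible interval. -/
def IrrInterval (M : ℕ) (pL pR : ℝ) : Prop :=
  ∃ a : List ℕ, a ≠ [] ∧ (∀ d ∈ a, d ≤ M) ∧ a.getLastD 0 < M ∧
    IrrSeq M (per a) ∧ piBase pL (per a) = 1 ∧
    piBase pR (wordThen (wordPlus a) (per (reflectWord M a))) = 1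

/-- `[pL, pR]` is a `*`-irreducible interval. -/
def StarIrrInterval (M : ℕ) (pL pR : ℝ) : Prop :=
  ∃ a : List ℕ, a ≠ [] ∧ (∀ d ∈ a, d ≤ M) ∧ a.getLastD 0 < M ∧
    StarIrrSeq M (per a) ∧ piBase pL (per a) = 1 ∧
    piBase pR (wordThen (wordPlus a) (per (reflectWord M a))) = 1

/-- Primitive words. -/
def PrimitiveWord (M : ℕ) (a : List ℕ) : Prop :=
  (∀ d ∈ a, d ≤ M) ∧ ∀ i < a.length,
    WordLt (reflectWord M (a.take (a.length - i))) (a.drop i) ∧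
      WordLe (a.drop i) (a.take (a.length - i))

/-- The defining property of the reflection recurrence word:
`a_{s+1}…a_m⁻ = \overline{a_1…a_{m-s}}` with `s < m`. -/
def RRpred (M : ℕ) (a : List ℕ) (s : ℕ) : Prop :=
  s < a.length ∧ wordMinus (a.drop s) = reflectWord M (a.take (a.length - s))

instance (M : ℕ) (a : List ℕ) : DecidablePred (RRpred M a) := fun s =>
  inferInstanceAs (Decidable (s < a.length ∧
    wordMinus (a.drop s) = reflectWord M (a.take (a.length - s))))

/-- The reflection recurrence word `R(a)` of a (primitive) word `a`. -/
noncomputable def RR (M : ℕ) (a : List ℕ) : List ℕ :=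
  letI : Decidable (∃ s, RRpred M a s) := Classical.dec _
  if h : ∃ s, RRpred M a s then a.take (Nat.find h) else a

/-- Iterates `R^j(a)` of the reflection recurrence word. -/
noncomputable def RRiter (M : ℕ) (a : List ℕ) : ℕ → List ℕ
  | 0 => a
  | j + 1 => RR M (RRiter M a j)

/-- The set `𝐈_N`. -/
def INset (M N : ℕ) : Set (ℕ → ℕ) :=
  {a | IsSeq M a ∧ pre a (2 * N) = List.replicate (2 * N - 1) M ++ [0] ∧
    ∀ s, 2 ≤ s → WordLt (List.replicate N 0) (factor a (s * N) N) ∧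
      WordLt (factor a (s * N) N) (List.replicate N M)}

/-- The sequence `γ = k^∞` (`M = 2k`) or `((k+1)k)^∞` (`M = 2k+1`), the quasi-greedy expansion
of `1` in the generalized golden ratio base. -/
def gammaG (M : ℕ) : ℕ → ℕ :=
  if M % 2 = 0 then per [M / 2] else per [M / 2 + 1, M / 2]

/-- The sequence `g = ((k+1)(k-1))^∞` (`M = 2k`) or `((k+1)(k+1)kk)^∞` (`M = 2k+1`), the
quasi-greedy expansion of `1` in base `q_{NT}`. -/
def gNT (M : ℕ) : ℕ → ℕ :=
  if M % 2 = 0 then per [M / 2 + 1, M / 2 - 1]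
  else per [M / 2 + 1, M / 2 + 1, M / 2, M / 2]

namespace S14

/-! ### Layer A : words as functions -/

def mkw (g : ℕ → ℕ) (len : ℕ) : List ℕ := (List.range len).map g

lemma mkw_length (g : ℕ → ℕ) (len : ℕ) : (mkw g len).length = len := by simp [mkw]

lemma mkw_getD (g : ℕ → ℕ) {len i : ℕ} (h : i < len) : (mkw g len).getD i 0 = g i := by
  rw [List.getD_eq_getElem _ _ (by simpa [mkw_length])]
  simp [mkw]

lemma mkw_congr {g h : ℕ → ℕ} {len : ℕ} (H : ∀ s < len, g s = h s) :
    mkw g len = mkw h len :=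
  List.map_congr_left fun a ha => H a (List.mem_range.mp ha)

lemma mkw_append (g h : ℕ → ℕ) (a b : ℕ) :
    mkw g a ++ mkw h b = mkw (fun s => if s < a then g s else h (s - a)) (a + b) := by
  unfold mkw
  rw [List.range_add, List.map_append, List.map_map]
  congr 1
  · apply List.map_congr_left; intro x hx
    rw [if_pos (List.mem_range.mp hx)]
  · apply List.map_congr_left; intro x hx
    simp

lemma wordPlus_mkw (g : ℕ → ℕ) {len : ℕ} (h : 0 < len) :
    wordPlus (mkw g len) = mkw (fun s => if s = len - 1 then g s + 1 else g s) len := by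
  obtain ⟨m, rfl⟩ : ∃ m, len = m + 1 := ⟨len - 1, by omega⟩
  have h1 : mkw g (m + 1) = mkw g m ++ [g m] := by
    rw [mkw, List.range_succ, List.map_append]; rfl
  rw [h1, wordPlus, List.dropLast_concat, List.getLastD_concat]
  have h2 : mkw (fun s => if s = m + 1 - 1 then g s + 1 else g s) (m + 1)
      = mkw (fun s => if s = m + 1 - 1 then g s + 1 else g s) m ++ [g m + 1] := by
    rw [mkw, List.range_succ, List.map_append]
    congr 1
    simp
  rw [h2]
  congr 1
  exact mkw_congr fun s hs => (if_neg (by omega)).symm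

lemma reflectWord_mkw (M : ℕ) (g : ℕ → ℕ) (len : ℕ) :
    reflectWord M (mkw g len) = mkw (fun s => M - g s) len := by
  rw [reflectWord, mkw, List.map_map]; rfl

lemma per_mkw (g : ℕ → ℕ) {len : ℕ} (h : 0 < len) :
    per (mkw g len) = fun i => g (i % len) := by
  funext i
  rw [per, mkw_length]
  exact mkw_getD _ (Nat.mod_lt _ h)

lemma flatten_replicate_mkw (g : ℕ → ℕ) (N : ℕ) :
    ∀ j, (List.replicate j (mkw g N)).flatten = mkw (fun s => g (s % N)) (j * N)
  | 0 => by simp [mkw]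
  | j + 1 => by
    rw [List.replicate_succ, List.flatten_cons, flatten_replicate_mkw g N j, mkw_append]
    have hlen : N + j * N = (j + 1) * N := by ring
    rw [hlen]
    apply mkw_congr
    intro s hs
    by_cases h1 : s < N
    · simp [h1, Nat.mod_eq_of_lt h1]
    · rw [if_neg h1]
      have : s % N = (s - N) % N := by
        conv_lhs => rw [show s = N + (s - N) by omega]
        rw [Nat.add_mod_left]
      rw [this]

lemma lamWord_mkw (M L : ℕ) : lamWord M L = mkw (lam M) L := rfl

lemma factor_mkw (x : ℕ → ℕ) (i n : ℕ) : factor x i n = mkw (fun t => x (i + t)) n := rfl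

lemma pre_mkw (x : ℕ → ℕ) (n : ℕ) : pre x n = mkw x n := by
  rw [pre, factor_mkw]; exact mkw_congr fun s _ => by rw [Nat.zero_add]

/-! ### Layer B : Thue–Morse facts -/

lemma tau_le_one (i : ℕ) : tau i ≤ 1 := by
  simp only [tau]
  omega

lemma tau_two_mul (i : ℕ) : tau (2 * i) = tau i := by
  rcases Nat.eq_zero_or_pos i with h | h
  · simp [h]
  · rw [tau, Nat.digits_def' (by norm_num : (1:ℕ) < 2) (by omega)]
    simp [Nat.mul_mod_right, Nat.mul_div_cancel_left _ (by norm_num : 0 < 2), tau]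

lemma tau_two_mul_add_one (i : ℕ) : tau (2 * i + 1) = 1 - tau i := by
  rw [tau, Nat.digits_def' (by norm_num : (1:ℕ) < 2) (by omega)]
  have h1 : (2 * i + 1) % 2 = 1 := by omega
  have h2 : (2 * i + 1) / 2 = i := by omega
  rw [h1, h2, List.sum_cons]
  unfold tau
  omega

lemma tau_zero : tau 0 = 0 := by simp [tau]

lemma tau_one : tau 1 = 1 := by
  rw [tau, Nat.digits_def' (by norm_num : (1:ℕ) < 2) one_pos]
  simp

lemma tau_pow_add : ∀ (m : ℕ), ∀ i < 2 ^ m, tau (2 ^ m + i) = 1 - tau i := by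
  intro m
  induction m with
  | zero =>
    intro i hi
    have hi0 : i = 0 := by omega
    subst hi0
    have e1 : 2 ^ 0 + 0 = 1 := by norm_num
    rw [e1, tau_one, tau_zero]
  | succ m ih =>
    intro i hi
    rcases Nat.even_or_odd i with ⟨q, hq⟩ | ⟨q, hq⟩
    · have h1 : 2 ^ (m + 1) + i = 2 * (2 ^ m + q) := by rw [hq]; ring
      rw [h1, tau_two_mul, ih q (by omega), hq, show q + q = 2 * q by ring, tau_two_mul]
    · have h1 : 2 ^ (m + 1) + i = 2 * (2 ^ m + q) + 1 := by rw [hq]; ring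
      have h2 : tau i = 1 - tau q := by rw [hq, tau_two_mul_add_one]
      rw [h1, tau_two_mul_add_one, ih q (by omega), h2]

lemma tau_pow (m : ℕ) : tau (2 ^ m) = 1 := by
  have h := tau_pow_add m 0 (by positivity)
  rw [Nat.add_zero, tau_zero] at h
  omega

lemma lam_le {M : ℕ} (hM : 1 ≤ M) (i : ℕ) : lam M i ≤ M := by
  rw [lam]
  have h1 := tau_le_one i
  have h2 := tau_le_one (i + 1)
  split_ifs with h <;> omega

lemma lam_zero (M : ℕ) : lam M 0 = M / 2 + 1 := by
  have h1 : tau 1 = 1 := by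
    rw [show (1:ℕ) = 2 * 0 + 1 by norm_num, tau_two_mul_add_one, tau_zero]
  rw [lam, h1, tau_zero]
  split_ifs <;> omega

lemma lam_doub {M : ℕ} (hM : 1 ≤ M) (m s : ℕ) (hs : s < 2 ^ m) :
    lam M (2 ^ m + s) = if s = 2 ^ m - 1 then M - lam M s + 1 else M - lam M s := by
  have hts : tau (2 ^ m + s) = 1 - tau s := tau_pow_add m s hs
  have h1 := tau_le_one s
  have h2 := tau_le_one (s + 1)
  by_cases hlast : s = 2 ^ m - 1
  · have hpos : 0 < 2 ^ m := by positivity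
    have he : 2 ^ (m + 1) = 2 ^ m + 2 ^ m := by ring
    have hs1 : 2 ^ m + s + 1 = 2 ^ (m + 1) := by omega
    have hts1 : tau (2 ^ m + s + 1) = 1 := by rw [hs1, tau_pow]
    have hsp1 : tau (s + 1) = 1 := by
      rw [show s + 1 = 2 ^ m by omega, tau_pow]
    rw [if_pos hlast, lam, lam, hts, hts1, hsp1]
    split_ifs with h <;> omega
  · have hts1 : tau (2 ^ m + s + 1) = 1 - tau (s + 1) := by
      rw [show 2 ^ m + s + 1 = 2 ^ m + (s + 1) by ring]
      exact tau_pow_add m (s + 1) (by omega)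
    rw [if_neg hlast, lam, lam, hts, hts1]
    split_ifs with h <;> omega

lemma lam_last_pos {M : ℕ} (hM : 1 ≤ M) : ∀ m, 1 ≤ lam M (2 ^ m - 1)
  | 0 => by rw [show 2 ^ 0 - 1 = 0 by norm_num, lam_zero]; omega
  | m + 1 => by
    have h0 : 0 < 2 ^ m := by positivity
    have h : 2 ^ (m + 1) - 1 = 2 ^ m + (2 ^ m - 1) := by
      have : 2 ^ (m + 1) = 2 ^ m + 2 ^ m := by ring
      omega
    rw [h, lam_doub hM m _ (by omega), if_pos rfl]
    omega

/-! ### Layer C : lexicographic comparison framework and the core lemma -/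

def LexLt (x y : ℕ → ℕ) (len : ℕ) : Prop :=
  ∃ d, d < len ∧ (∀ s, s < d → x s = y s) ∧ x d < y d

def LexEq (x y : ℕ → ℕ) (len : ℕ) : Prop := ∀ s, s < len → x s = y s

def LexLe (x y : ℕ → ℕ) (len : ℕ) : Prop := LexLt x y len ∨ LexEq x y len

lemma LexLt.mono {x y : ℕ → ℕ} {len len' : ℕ} (h : LexLt x y len) (hl : len ≤ len') :
    LexLt x y len' :=
  let ⟨d, hd, hp, hs⟩ := h; ⟨d, by omega, hp, hs⟩

lemma lexLt_def {x y : ℕ → ℕ} {len : ℕ} (d : ℕ) (hd : d < len)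
    (hp : ∀ s, s < d → x s = y s) (hlt : x d < y d) : LexLt x y len := ⟨d, hd, hp, hlt⟩

/-- The core combinatorial lemma on the doubling word `θ_n = λ_1 … λ_{2^n}`:
(L1) `θ_{t+1…N} ≼ θ_{1…N-t}` and (L2) `θ̄_{1…N-t} ≺ θ_{t+1…N}`. -/
theorem core (M : ℕ) (hM : 1 ≤ M) : ∀ n : ℕ,
    (∀ t, 0 < t → t < 2 ^ n →
      LexLe (fun s => lam M (t + s)) (lam M) (2 ^ n - t)) ∧
    (∀ t, t < 2 ^ n →
      LexLt (fun s => M - lam M s) (fun s => lam M (t + s)) (2 ^ n - t)) := by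
  have hle : ∀ s, lam M s ≤ M := lam_le hM
  have hf0 : lam M 0 = M / 2 + 1 := lam_zero M
  intro n
  induction n with
  | zero =>
    constructor
    · intro t ht0 ht1; omega
    · intro t ht
      have ht0 : t = 0 := by omega
      subst ht0
      refine ⟨0, by norm_num, fun s hs => absurd hs (by omega), ?_⟩
      show M - lam M 0 < lam M (0 + 0)
      rw [Nat.zero_add, hf0]
      omega
  | succ n ih =>
    obtain ⟨L1, L2⟩ := ih
    set N := 2 ^ n with hNdef
    have hN : 0 < N := by positivity
    have hNN : 2 ^ (n + 1) = N + N := by rw [hNdef]; ring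
    have D : ∀ s < N, lam M (N + s) =
        if s = N - 1 then M - lam M s + 1 else M - lam M s := lam_doub hM n
    have lastpos : 1 ≤ lam M (N - 1) := lam_last_pos hM n
    -- L3 : θ̄_{t+1…N} ≺ θ_{1…N-t}
    have L3 : ∀ t, t < N →
        LexLt (fun s => M - lam M (t + s)) (lam M) (N - t) := by
      intro t ht
      obtain ⟨d, hd, hp, hlt⟩ := L2 t ht
      simp only at hp hlt
      refine ⟨d, hd, fun s hs => ?_, ?_⟩
      · show M - lam M (t + s) = lam M s
        have := hp s hs
        have := hle s
        omega
      · show M - lam M (t + d) < lam M d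
        have := hle d
        have := hle (t + d)
        omega
    -- L1R : θ̄_{1…N-t} ≼ θ̄_{t+1…N}
    have L1R : ∀ t, 0 < t → t < N →
        LexLe (fun s => M - lam M s) (fun s => M - lam M (t + s)) (N - t) := by
      intro t ht0 ht
      rcases L1 t ht0 ht with ⟨d, hd, hp, hlt⟩ | heq
      · simp only at hp hlt
        refine Or.inl ⟨d, hd, fun s hs => ?_, ?_⟩
        · show M - lam M s = M - lam M (t + s)
          rw [hp s hs]
        · show M - lam M d < M - lam M (t + d)
          have := hle d
          omega
      · refine Or.inr fun s hs => ?_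
        have heq' : ∀ s, s < N - t → lam M (t + s) = lam M s := heq
        show M - lam M s = M - lam M (t + s)
        rw [heq' s hs]
    rw [hNN]
    constructor
    · -- (L1')
      intro t ht0 ht
      rcases lt_trichotomy t N with h | h | h
      · -- 0 < t < N
        rcases L1 t ht0 h with hlt | heq
        · exact Or.inl (hlt.mono (by omega))
        · left
          obtain ⟨d, hd, hp, hlt⟩ := L2 (N - t) (by omega)
          simp only at hp hlt
          have hdt : d < t := by omega
          refine ⟨(N - t) + d, by omega, fun s hs => ?_, ?_⟩
          · show lam M (t + s) = lam M s
            by_cases hsN : s < N - t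
            · exact heq s hsN
            · have hs' : s - (N - t) < d := by omega
              rw [show t + s = N + (s - (N - t)) by omega, D _ (by omega), if_neg (by omega)]
              have h3 := hp _ hs'
              rw [show (N - t) + (s - (N - t)) = s by omega] at h3
              exact h3
          · show lam M (t + ((N - t) + d)) < lam M ((N - t) + d)
            rw [show t + ((N - t) + d) = N + d by omega, D d (by omega), if_neg (by omega)]
            exact hlt
      · -- t = N
        by_cases hN1 : N = 1
        · have hv : lam M (t + 0) = M - lam M 0 + 1 := by
            rw [show t + 0 = N + 0 by omega, D 0 (by omega), if_pos (by omega)]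
          rcases Nat.lt_or_ge (lam M (t + 0)) (lam M 0) with hlt | hge
          · exact Or.inl ⟨0, by omega, fun s hs => absurd hs (by omega), hlt⟩
          · refine Or.inr fun s hs => ?_
            show lam M (t + s) = lam M s
            have hs0 : s = 0 := by omega
            subst hs0
            omega
        · refine Or.inl ⟨0, by omega, fun s hs => absurd hs (by omega), ?_⟩
          show lam M (t + 0) < lam M 0
          rw [show t + 0 = N + 0 by omega, D 0 (by omega), if_neg (by omega), hf0]
          omega
      · -- N < t < 2N
        have hi0 : 0 < t - N := by omega
        have hiN : t - N < N := by omega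
        obtain ⟨d, hd, hp, hlt⟩ := L3 (t - N) hiN
        simp only at hp hlt
        have hwin : N + N - t = N - (t - N) := by omega
        rw [hwin]
        have hprefix : ∀ s, s < d → lam M (t + s) = lam M s := by
          intro s hs
          rw [show t + s = N + ((t - N) + s) by omega, D _ (by omega), if_neg (by omega)]
          exact hp s hs
        by_cases hdl : d = N - 1 - (t - N)
        · -- d is the last position of the window
          have hv : lam M (t + d) = M - lam M (N - 1) + 1 := by
            rw [show t + d = N + ((t - N) + d) by omega, D _ (by omega),
              if_pos (by omega), show (t - N) + d = N - 1 by omega]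
          have hlt' : M - lam M (N - 1) < lam M d := by
            have e : (t - N) + d = N - 1 := by omega
            rw [e] at hlt
            exact hlt
          rcases Nat.lt_or_ge (lam M (t + d)) (lam M d) with hltv | hgev
          · exact Or.inl ⟨d, by omega, hprefix, hltv⟩
          · refine Or.inr fun s hs => ?_
            show lam M (t + s) = lam M s
            rcases Nat.lt_or_ge s d with h1 | h1
            · exact hprefix s h1
            · have hsd : s = d := by omega
              subst hsd
              omega
        · refine Or.inl ⟨d, by omega, hprefix, ?_⟩
          show lam M (t + d) < lam M d
          rw [show t + d = N + ((t - N) + d) by omega, D _ (by omega), if_neg (by omega)]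
          exact hlt
    · -- (L2')
      intro t ht
      rcases lt_trichotomy t N with h | h | h
      · exact (L2 t h).mono (by omega)
      · refine ⟨N - 1, by omega, fun s hs => ?_, ?_⟩
        · show M - lam M s = lam M (t + s)
          rw [show t + s = N + s by omega, D s (by omega), if_neg (by omega)]
        · show M - lam M (N - 1) < lam M (t + (N - 1))
          rw [show t + (N - 1) = N + (N - 1) by omega, D (N - 1) (by omega), if_pos rfl]
          have := hle (N - 1)
          omega
      · -- t = N + i with 0 < i < N
        have hi0 : 0 < t - N := by omega
        have hiN : t - N < N := by omega
        have hwin : N + N - t = N - (t - N) := by omega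
        rw [hwin]
        rcases L1R (t - N) hi0 hiN with ⟨d, hd, hp, hlt⟩ | heq
        · simp only at hp hlt
          refine ⟨d, hd, fun s hs => ?_, ?_⟩
          · show M - lam M s = lam M (t + s)
            rw [show t + s = N + ((t - N) + s) by omega, D _ (by omega), if_neg (by omega)]
            exact hp s hs
          · show M - lam M d < lam M (t + d)
            by_cases hdl : (t - N) + d = N - 1
            · rw [show t + d = N + ((t - N) + d) by omega, D _ (by omega), if_pos hdl]
              omega
            · rw [show t + d = N + ((t - N) + d) by omega, D _ (by omega), if_neg hdl]
              exact hlt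
        · refine ⟨N - 1 - (t - N), by omega, fun s hs => ?_, ?_⟩
          · show M - lam M s = lam M (t + s)
            rw [show t + s = N + ((t - N) + s) by omega, D _ (by omega), if_neg (by omega)]
            exact heq s (by omega)
          · show M - lam M (N - 1 - (t - N)) < lam M (t + (N - 1 - (t - N)))
            rw [show t + (N - 1 - (t - N)) = N + (N - 1) by omega, D _ (by omega), if_pos rfl]
            have h5 := heq (N - 1 - (t - N)) (by omega)
            simp only at h5
            rw [show (t - N) + (N - 1 - (t - N)) = N - 1 by omega] at h5
            omega

/-! ### Layer D : the sequence `a` and its comparison lemmas -/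

lemma coreL3 (M : ℕ) (hM : 1 ≤ M) (n : ℕ) :
    ∀ t, t < 2 ^ n → LexLt (fun s => M - lam M (t + s)) (lam M) (2 ^ n - t) := by
  have hle : ∀ s, lam M s ≤ M := lam_le hM
  intro t ht
  obtain ⟨d, hd, hp, hlt⟩ := (core M hM n).2 t ht
  simp only at hp hlt
  refine ⟨d, hd, fun s hs => ?_, ?_⟩
  · show M - lam M (t + s) = lam M s
    have := hp s hs
    have := hle s
    omega
  · show M - lam M (t + d) < lam M d
    have := hle d
    have := hle (t + d)
    omega

lemma coreL1R (M : ℕ) (hM : 1 ≤ M) (n : ℕ) :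
    ∀ t, 0 < t → t < 2 ^ n →
      LexLe (fun s => M - lam M s) (fun s => M - lam M (t + s)) (2 ^ n - t) := by
  have hle : ∀ s, lam M s ≤ M := lam_le hM
  intro t ht0 ht
  rcases (core M hM n).1 t ht0 ht with ⟨d, hd, hp, hlt⟩ | heq
  · simp only at hp hlt
    refine Or.inl ⟨d, hd, fun s hs => ?_, ?_⟩
    · show M - lam M s = M - lam M (t + s)
      rw [hp s hs]
    · show M - lam M d < M - lam M (t + d)
      have := hle d
      omega
  · refine Or.inr fun s hs => ?_
    have heq' : ∀ s, s < 2 ^ n - t → lam M (t + s) = lam M s := heq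
    show M - lam M s = M - lam M (t + s)
    rw [heq' s hs]

/-- The letter of the block `v = θ̄⁺`. -/
def vf (M n s : ℕ) : ℕ :=
  if s = 2 ^ n - 1 then M - lam M (2 ^ n - 1) + 1 else M - lam M s

/-- The letter `s` of block `q` of the periodic pattern `θ v^j θ̄`. -/
def bf (M n j q s : ℕ) : ℕ :=
  if q = 0 then lam M s else if q ≤ j then vf M n s else M - lam M s

/-- The sequence `a = (θ v^j θ̄)^∞` as a function. -/
def aF (M n j p : ℕ) : ℕ := bf M n j (p / 2 ^ n % (j + 2)) (p % 2 ^ n)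

lemma bf_zero (M n j s : ℕ) : bf M n j 0 s = lam M s := by simp [bf]

lemma bf_mid (M n j s : ℕ) {q : ℕ} (h1 : q ≠ 0) (h2 : q ≤ j) : bf M n j q s = vf M n s := by
  rw [bf, if_neg h1, if_pos h2]

lemma bf_top (M n j s : ℕ) : bf M n j (j + 1) s = M - lam M s := by
  rw [bf, if_neg (by omega), if_neg (by omega)]

lemma vf_ne (M n : ℕ) {s : ℕ} (h : s ≠ 2 ^ n - 1) : vf M n s = M - lam M s := if_neg h

lemma vf_last (M n : ℕ) : vf M n (2 ^ n - 1) = M - lam M (2 ^ n - 1) + 1 := if_pos rfl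

lemma dmdiv {N q s : ℕ} (hN : 0 < N) (hs : s < N) : (N * q + s) / N = q := by
  rw [Nat.mul_add_div hN, Nat.div_eq_of_lt hs, Nat.add_zero]

lemma dmmod {N q s : ℕ} (hs : s < N) : (N * q + s) % N = s := by
  rw [Nat.mul_add_mod, Nat.mod_eq_of_lt hs]

lemma aF_blk (M n j p : ℕ) : aF M n j p = bf M n j (p / 2 ^ n % (j + 2)) (p % 2 ^ n) := rfl

lemma aF_small (M n j : ℕ) {p : ℕ} (hp : p < 2 ^ n) : aF M n j p = lam M p := by
  unfold aF
  rw [Nat.div_eq_of_lt hp, Nat.zero_mod, Nat.mod_eq_of_lt hp, bf_zero]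

lemma aval (M n j q : ℕ) {s : ℕ} (hs : s < 2 ^ n) :
    aF M n j (2 ^ n * q + s) = bf M n j (q % (j + 2)) s := by
  have hN : 0 < 2 ^ n := by positivity
  unfold aF
  rw [dmdiv hN hs, dmmod hs]

lemma aF_mid (M n j : ℕ) (hj : 1 ≤ j) {s : ℕ} (hs : s < 2 ^ n) :
    aF M n j (2 ^ n + s) = vf M n s := by
  have h := aval M n j 1 hs
  rw [show 2 ^ n * 1 + s = 2 ^ n + s by ring] at h
  rw [h, Nat.mod_eq_of_lt (by omega), bf_mid _ _ _ _ one_ne_zero hj]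

lemma aF_pos1 (M n j r : ℕ) {i : ℕ} (h : r % 2 ^ n + i < 2 ^ n) :
    aF M n j (i + r) = bf M n j (r / 2 ^ n % (j + 2)) (r % 2 ^ n + i) := by
  have hN : 0 < 2 ^ n := by positivity
  have hr := Nat.div_add_mod r (2 ^ n)
  have e1 : i + r = 2 ^ n * (r / 2 ^ n) + (r % 2 ^ n + i) := by omega
  unfold aF
  rw [e1, dmdiv hN h, dmmod h]

lemma aF_pos2 (M n j r : ℕ) {i : ℕ} (h1 : 2 ^ n ≤ r % 2 ^ n + i)
    (h2 : r % 2 ^ n + i < 2 ^ n + 2 ^ n) :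
    aF M n j (i + r) =
      bf M n j ((r / 2 ^ n % (j + 2) + 1) % (j + 2)) (r % 2 ^ n + i - 2 ^ n) := by
  have hN : 0 < 2 ^ n := by positivity
  have hr := Nat.div_add_mod r (2 ^ n)
  have e2 : 2 ^ n * (r / 2 ^ n + 1) = 2 ^ n * (r / 2 ^ n) + 2 ^ n := by ring
  have e1 : i + r = 2 ^ n * (r / 2 ^ n + 1) + (r % 2 ^ n + i - 2 ^ n) := by omega
  unfold aF
  rw [e1, dmdiv hN (by omega), dmmod (by omega), Nat.add_mod (r / 2 ^ n) 1,
    Nat.mod_eq_of_lt (show 1 < j + 2 by omega)]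

lemma aF_per (M n j r : ℕ) (h0 : r % (2 ^ n * (j + 2)) = 0) (i : ℕ) :
    aF M n j (i + r) = aF M n j i := by
  have hN : 0 < 2 ^ n := by positivity
  obtain ⟨c, hc⟩ := Nat.dvd_of_mod_eq_zero h0
  subst hc
  unfold aF
  have e1 : i + 2 ^ n * (j + 2) * c = 2 ^ n * ((j + 2) * c) + i := by ring
  rw [e1, Nat.mul_add_div hN, Nat.mul_add_mod, Nat.mul_add_mod]

lemma aF_le (M n j : ℕ) (hM : 1 ≤ M) (p : ℕ) : aF M n j p ≤ M := by
  have hle : ∀ s, lam M s ≤ M := lam_le hM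
  have lastpos : 1 ≤ lam M (2 ^ n - 1) := lam_last_pos hM n
  unfold aF bf vf
  split_ifs with h1 h2 h3
  · exact hle _
  · have := hle (2 ^ n - 1); omega
  · omega
  · omega

/-- Continuation lemma: if the shifted sequence agrees with `a` on the first partial block
and the following positions take the reflected values `M - λ_s`, then `σ^r(a) ≺ a`. -/
lemma contB (M n j : ℕ) (hM : 1 ≤ M) (r : ℕ) (ht : 0 < r % 2 ^ n)
    (H1 : ∀ i, i < 2 ^ n - r % 2 ^ n → aF M n j (i + r) = aF M n j i)
    (H2 : ∀ s, s < 2 ^ n - 1 → aF M n j ((2 ^ n - r % 2 ^ n + s) + r) = M - lam M s) :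
    SeqLt (shiftn r (aF M n j)) (aF M n j) := by
  have hN : 0 < 2 ^ n := by positivity
  have htN : r % 2 ^ n < 2 ^ n := Nat.mod_lt _ hN
  obtain ⟨d, hd, hp, hlt⟩ := (core M hM n).2 (2 ^ n - r % 2 ^ n) (by omega)
  simp only at hp hlt
  have hd' : d < r % 2 ^ n := by omega
  refine ⟨(2 ^ n - r % 2 ^ n) + d, fun i hi => ?_, ?_⟩
  · show aF M n j (i + r) = aF M n j i
    by_cases hiw : i < 2 ^ n - r % 2 ^ n
    · exact H1 i hiw
    · have hs' : i - (2 ^ n - r % 2 ^ n) < d := by omega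
      have h5 := H2 (i - (2 ^ n - r % 2 ^ n)) (by omega)
      rw [show 2 ^ n - r % 2 ^ n + (i - (2 ^ n - r % 2 ^ n)) = i by omega] at h5
      rw [h5, aF_small M n j (by omega)]
      have h6 := hp _ hs'
      rw [show 2 ^ n - r % 2 ^ n + (i - (2 ^ n - r % 2 ^ n)) = i by omega] at h6
      exact h6
  · show aF M n j ((2 ^ n - r % 2 ^ n + d) + r) < aF M n j (2 ^ n - r % 2 ^ n + d)
    rw [H2 d (by omega), aF_small M n j (by omega)]
    exact hlt

/-- Lemma B : `σ^r(a) ≼ a` for every `r`. -/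
lemma lemB (M n j : ℕ) (hM : 1 ≤ M) (hn : 1 ≤ n) (hj : 1 ≤ j) (r : ℕ) :
    SeqLe (shiftn r (aF M n j)) (aF M n j) := by
  have hN : 0 < 2 ^ n := by positivity
  have hN2 : 2 ≤ 2 ^ n := by
    calc (2:ℕ) = 2 ^ 1 := by norm_num
    _ ≤ 2 ^ n := Nat.pow_le_pow_right (by norm_num) hn
  have hle : ∀ s, lam M s ≤ M := lam_le hM
  have hf0 : lam M 0 = M / 2 + 1 := lam_zero M
  have lastpos : 1 ≤ lam M (2 ^ n - 1) := lam_last_pos hM n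
  have htN : r % 2 ^ n < 2 ^ n := Nat.mod_lt _ hN
  have hQ : r / 2 ^ n % (j + 2) < j + 2 := Nat.mod_lt _ (by omega)
  by_cases ht : r % 2 ^ n = 0
  · by_cases hQ0 : r / 2 ^ n % (j + 2) = 0
    · -- `r` is a multiple of the period: equality
      right
      funext i
      show aF M n j (i + r) = aF M n j i
      apply aF_per
      obtain ⟨c, hc⟩ := Nat.dvd_of_mod_eq_zero ht
      have hc' : r / 2 ^ n = c := by rw [hc]; exact Nat.mul_div_cancel_left c hN
      obtain ⟨e, he⟩ := Nat.dvd_of_mod_eq_zero (show c % (j + 2) = 0 by rw [← hc']; exact hQ0)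
      rw [hc, he, show 2 ^ n * ((j + 2) * e) = 2 ^ n * (j + 2) * e by ring]
      exact Nat.mul_mod_right _ _
    · -- strict at position 0
      left
      refine ⟨0, fun i hi => absurd hi (by omega), ?_⟩
      show aF M n j (0 + r) < aF M n j 0
      rw [aF_pos1 M n j r (by omega), show r % 2 ^ n + 0 = 0 by omega,
        aF_small M n j hN]
      by_cases hQj : r / 2 ^ n % (j + 2) ≤ j
      · rw [bf_mid M n j 0 hQ0 hQj, vf_ne M n (by omega), hf0]
        omega
      · rw [show r / 2 ^ n % (j + 2) = j + 1 by omega, bf_top, hf0]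
        omega
  · -- `0 < t < N`
    left
    by_cases hQ0 : r / 2 ^ n % (j + 2) = 0
    · rcases (core M hM n).1 (r % 2 ^ n) (by omega) htN with ⟨d, hd, hp, hlt⟩ | heq
      · simp only at hp hlt
        refine ⟨d, fun i hi => ?_, ?_⟩
        · show aF M n j (i + r) = aF M n j i
          rw [aF_pos1 M n j r (by omega), hQ0, bf_zero, hp i hi, aF_small M n j (by omega)]
        · show aF M n j (d + r) < aF M n j d
          rw [aF_pos1 M n j r (by omega), hQ0, bf_zero, aF_small M n j (by omega)]
          exact hlt
      · have heq' : ∀ s, s < 2 ^ n - r % 2 ^ n → lam M (r % 2 ^ n + s) = lam M s := heq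
        apply contB M n j hM r (by omega)
        · intro i hi
          rw [aF_pos1 M n j r (by omega), hQ0, bf_zero, heq' i hi, aF_small M n j (by omega)]
        · intro s hs
          rw [aF_pos2 M n j r (by omega) (by omega), hQ0,
            show (0 + 1) % (j + 2) = 1 from Nat.mod_eq_of_lt (by omega),
            show r % 2 ^ n + (2 ^ n - r % 2 ^ n + s) - 2 ^ n = s by omega,
            bf_mid M n j s one_ne_zero hj, vf_ne M n (by omega)]
    · by_cases hQj : r / 2 ^ n % (j + 2) ≤ j
      · -- middle block `v`
        obtain ⟨d, hd, hp, hlt⟩ := coreL3 M hM n (r % 2 ^ n) htN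
        simp only at hp hlt
        by_cases hdl : r % 2 ^ n + d = 2 ^ n - 1
        · have hlt' : M - lam M (2 ^ n - 1) < lam M d := by rw [← hdl]; exact hlt
          rcases Nat.lt_or_ge (M - lam M (2 ^ n - 1) + 1) (lam M d) with hcase | hcase
          · refine ⟨d, fun i hi => ?_, ?_⟩
            · show aF M n j (i + r) = aF M n j i
              rw [aF_pos1 M n j r (by omega), bf_mid M n j _ hQ0 hQj,
                vf_ne M n (by omega), hp i hi, aF_small M n j (by omega)]
            · show aF M n j (d + r) < aF M n j d
              rw [aF_pos1 M n j r (by omega), bf_mid M n j _ hQ0 hQj, hdl, vf_last,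
                aF_small M n j (by omega)]
              exact hcase
          · apply contB M n j hM r (by omega)
            · intro i hi
              rw [aF_pos1 M n j r (by omega), bf_mid M n j _ hQ0 hQj]
              by_cases hii : r % 2 ^ n + i = 2 ^ n - 1
              · have hid : i = d := by omega
                rw [hii, vf_last, aF_small M n j (by omega), hid]
                omega
              · rw [vf_ne M n hii, hp i (by omega), aF_small M n j (by omega)]
            · intro s hs
              rw [aF_pos2 M n j r (by omega) (by omega),
                show r % 2 ^ n + (2 ^ n - r % 2 ^ n + s) - 2 ^ n = s by omega,
                Nat.mod_eq_of_lt (show r / 2 ^ n % (j + 2) + 1 < j + 2 by omega)]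
              by_cases hq1 : r / 2 ^ n % (j + 2) + 1 ≤ j
              · rw [bf_mid M n j s (by omega) hq1, vf_ne M n (by omega)]
              · rw [show r / 2 ^ n % (j + 2) + 1 = j + 1 by omega, bf_top]
        · refine ⟨d, fun i hi => ?_, ?_⟩
          · show aF M n j (i + r) = aF M n j i
            rw [aF_pos1 M n j r (by omega), bf_mid M n j _ hQ0 hQj,
              vf_ne M n (by omega), hp i hi, aF_small M n j (by omega)]
          · show aF M n j (d + r) < aF M n j d
            rw [aF_pos1 M n j r (by omega), bf_mid M n j _ hQ0 hQj, vf_ne M n hdl,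
              aF_small M n j (by omega)]
            exact hlt
      · -- top block `θ̄`
        have hQtop : r / 2 ^ n % (j + 2) = j + 1 := by omega
        obtain ⟨d, hd, hp, hlt⟩ := coreL3 M hM n (r % 2 ^ n) htN
        simp only at hp hlt
        refine ⟨d, fun i hi => ?_, ?_⟩
        · show aF M n j (i + r) = aF M n j i
          rw [aF_pos1 M n j r (by omega), hQtop, bf_top, hp i hi,
            aF_small M n j (by omega)]
        · show aF M n j (d + r) < aF M n j d
          rw [aF_pos1 M n j r (by omega), hQtop, bf_top, aF_small M n j (by omega)]
          exact hlt

/-- Lemma A : `ā ≺ σ^r(a)` with first difference before position `2·2^n`. -/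
lemma lemA (M n j : ℕ) (hM : 1 ≤ M) (hn : 1 ≤ n) (hj : 1 ≤ j) (r : ℕ) :
    ∃ d, d < 2 * 2 ^ n ∧ (∀ i, i < d → M - aF M n j i = aF M n j (i + r)) ∧
      M - aF M n j d < aF M n j (d + r) := by
  have hN : 0 < 2 ^ n := by positivity
  have hN2 : 2 ≤ 2 ^ n := by
    calc (2:ℕ) = 2 ^ 1 := by norm_num
    _ ≤ 2 ^ n := Nat.pow_le_pow_right (by norm_num) hn
  have hle : ∀ s, lam M s ≤ M := lam_le hM
  have hf0 : lam M 0 = M / 2 + 1 := lam_zero M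
  have lastpos : 1 ≤ lam M (2 ^ n - 1) := lam_last_pos hM n
  have htN : r % 2 ^ n < 2 ^ n := Nat.mod_lt _ hN
  have hQ : r / 2 ^ n % (j + 2) < j + 2 := Nat.mod_lt _ (by omega)
  by_cases ht : r % 2 ^ n = 0
  · by_cases hQ0 : r / 2 ^ n % (j + 2) = 0
    · -- block `θ` : strict at 0
      refine ⟨0, by omega, fun i hi => absurd hi (by omega), ?_⟩
      rw [aF_pos1 M n j r (by omega), show r % 2 ^ n + 0 = 0 by omega, hQ0, bf_zero,
        aF_small M n j hN, hf0]
      omega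
    · by_cases hQtop : r / 2 ^ n % (j + 2) = j + 1
      · -- block `θ̄` : equal for a block, then strict at `2N-1`
        refine ⟨2 * 2 ^ n - 1, by omega, fun i hi => ?_, ?_⟩
        · by_cases hiN : i < 2 ^ n
          · rw [aF_small M n j hiN, aF_pos1 M n j r (by omega),
              show r % 2 ^ n + i = i by omega, hQtop, bf_top]
          · rw [show i = 2 ^ n + (i - 2 ^ n) by omega, aF_mid M n j hj (by omega),
              vf_ne M n (by omega), aF_pos2 M n j r (by omega) (by omega), hQtop,
              show (j + 1 + 1) % (j + 2) = 0 from Nat.mod_self _, bf_zero,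
              show r % 2 ^ n + (2 ^ n + (i - 2 ^ n)) - 2 ^ n = i - 2 ^ n by omega]
            have := hle (i - 2 ^ n)
            omega
        · rw [show 2 * 2 ^ n - 1 = 2 ^ n + (2 ^ n - 1) by omega, aF_mid M n j hj (by omega),
            vf_last, aF_pos2 M n j r (by omega) (by omega), hQtop,
            show (j + 1 + 1) % (j + 2) = 0 from Nat.mod_self _, bf_zero,
            show r % 2 ^ n + (2 ^ n + (2 ^ n - 1)) - 2 ^ n = 2 ^ n - 1 by omega]
          have := hle (2 ^ n - 1)
          omega
      · -- block `v` : equal for `N-1` letters then strict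
        refine ⟨2 ^ n - 1, by omega, fun i hi => ?_, ?_⟩
        · rw [aF_small M n j (by omega), aF_pos1 M n j r (by omega),
            show r % 2 ^ n + i = i by omega, bf_mid M n j i hQ0 (by omega),
            vf_ne M n (by omega)]
        · rw [aF_small M n j (by omega), aF_pos1 M n j r (by omega),
            show r % 2 ^ n + (2 ^ n - 1) = 2 ^ n - 1 by omega,
            bf_mid M n j _ hQ0 (by omega), vf_last]
          have := hle (2 ^ n - 1)
          omega
  · -- `0 < t < N`
    by_cases hQ0 : r / 2 ^ n % (j + 2) = 0
    · -- block `θ` : L2 gives a strict difference inside the partial block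
      obtain ⟨d, hd, hp, hlt⟩ := (core M hM n).2 (r % 2 ^ n) htN
      simp only at hp hlt
      refine ⟨d, by omega, fun i hi => ?_, ?_⟩
      · rw [aF_small M n j (by omega), aF_pos1 M n j r (by omega), hQ0, bf_zero]
        exact hp i hi
      · rw [aF_small M n j (by omega), aF_pos1 M n j r (by omega), hQ0, bf_zero]
        exact hlt
    · by_cases hQtop : r / 2 ^ n % (j + 2) = j + 1
      · -- block `θ̄`
        rcases coreL1R M hM n (r % 2 ^ n) (by omega) htN with ⟨d, hd, hp, hlt⟩ | heq
        · simp only at hp hlt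
          refine ⟨d, by omega, fun i hi => ?_, ?_⟩
          · rw [aF_small M n j (by omega), aF_pos1 M n j r (by omega), hQtop, bf_top]
            exact hp i hi
          · rw [aF_small M n j (by omega), aF_pos1 M n j r (by omega), hQtop, bf_top]
            exact hlt
        · -- full agreement on the partial block ; continue into the next block `θ`
          have heq' : ∀ s, s < 2 ^ n - r % 2 ^ n →
              M - lam M s = M - lam M (r % 2 ^ n + s) := heq
          obtain ⟨d, hd, hp, hlt⟩ := coreL3 M hM n (2 ^ n - r % 2 ^ n) (by omega)
          simp only at hp hlt
          have hd' : d < r % 2 ^ n := by omega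
          refine ⟨(2 ^ n - r % 2 ^ n) + d, by omega, fun i hi => ?_, ?_⟩
          · by_cases hiw : i < 2 ^ n - r % 2 ^ n
            · rw [aF_small M n j (by omega), aF_pos1 M n j r (by omega), hQtop, bf_top]
              exact heq' i hiw
            · have hs' : i - (2 ^ n - r % 2 ^ n) < d := by omega
              rw [aF_small M n j (by omega), aF_pos2 M n j r (by omega) (by omega), hQtop,
                show (j + 1 + 1) % (j + 2) = 0 from Nat.mod_self _, bf_zero,
                show r % 2 ^ n + i - 2 ^ n = i - (2 ^ n - r % 2 ^ n) by omega]
              have h5 := hp _ hs'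
              rw [show 2 ^ n - r % 2 ^ n + (i - (2 ^ n - r % 2 ^ n)) = i by omega] at h5
              exact h5
          · rw [aF_small M n j (by omega), aF_pos2 M n j r (by omega) (by omega), hQtop,
              show (j + 1 + 1) % (j + 2) = 0 from Nat.mod_self _, bf_zero,
              show r % 2 ^ n + (2 ^ n - r % 2 ^ n + d) - 2 ^ n = d by omega]
            exact hlt
      · -- block `v`
        rcases coreL1R M hM n (r % 2 ^ n) (by omega) htN with ⟨d, hd, hp, hlt⟩ | heq
        · simp only at hp hlt
          refine ⟨d, by omega, fun i hi => ?_, ?_⟩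
          · rw [aF_small M n j (by omega), aF_pos1 M n j r (by omega),
              bf_mid M n j _ hQ0 (by omega), vf_ne M n (by omega)]
            exact hp i hi
          · rw [aF_small M n j (by omega), aF_pos1 M n j r (by omega),
              bf_mid M n j _ hQ0 (by omega)]
            by_cases hdl : r % 2 ^ n + d = 2 ^ n - 1
            · rw [hdl, vf_last]
              rw [← hdl]
              omega
            · rw [vf_ne M n hdl]
              exact hlt
        · have heq' : ∀ s, s < 2 ^ n - r % 2 ^ n →
              M - lam M s = M - lam M (r % 2 ^ n + s) := heq
          refine ⟨2 ^ n - 1 - r % 2 ^ n, by omega, fun i hi => ?_, ?_⟩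
          · rw [aF_small M n j (by omega), aF_pos1 M n j r (by omega),
              bf_mid M n j _ hQ0 (by omega), vf_ne M n (by omega)]
            exact heq' i (by omega)
          · rw [aF_small M n j (by omega), aF_pos1 M n j r (by omega),
              bf_mid M n j _ hQ0 (by omega),
              show r % 2 ^ n + (2 ^ n - 1 - r % 2 ^ n) = 2 ^ n - 1 by omega, vf_last]
            have h5 := heq' (2 ^ n - 1 - r % 2 ^ n) (by omega)
            rw [show r % 2 ^ n + (2 ^ n - 1 - r % 2 ^ n) = 2 ^ n - 1 by omega] at h5
            omega

/-! ### Layer E : identification of the list, `ξ` comparisons, assembly -/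

lemma wordThen_mkw (g x : ℕ → ℕ) (len i : ℕ) :
    wordThen (mkw g len) x i = if i < len then g i else x (i - len) := by
  unfold wordThen
  rw [mkw_length]
  split_ifs with h
  · exact mkw_getD g h
  · rfl

lemma big_eq (M n j : ℕ) (hM : 1 ≤ M) (hn : 1 ≤ n) (hj : 1 ≤ j) :
    lamWord M (2 ^ n) ++
        (List.replicate j (wordPlus (reflectWord M (lamWord M (2 ^ n))))).flatten ++
        reflectWord M (lamWord M (2 ^ n)) =
      mkw (aF M n j) (2 ^ n + j * 2 ^ n + 2 ^ n) := by
  have hN : 0 < 2 ^ n := by positivity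
  rw [lamWord_mkw, reflectWord_mkw, wordPlus_mkw _ hN, flatten_replicate_mkw,
    mkw_append, mkw_append]
  refine mkw_congr fun p hp => ?_
  by_cases h1 : p < 2 ^ n
  · rw [if_pos (by omega), if_pos h1, aF_small M n j h1]
  · by_cases h2 : p < 2 ^ n + j * 2 ^ n
    · rw [if_pos h2, if_neg h1]
      have hd := Nat.div_add_mod (p - 2 ^ n) (2 ^ n)
      have hs := Nat.mod_lt (p - 2 ^ n) hN
      have e6 : 2 ^ n * j = j * 2 ^ n := by ring
      have hq' : (p - 2 ^ n) / 2 ^ n < j := Nat.div_lt_of_lt_mul (by omega)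
      have ha := aval M n j ((p - 2 ^ n) / 2 ^ n + 1) hs
      have e2 : 2 ^ n * ((p - 2 ^ n) / 2 ^ n + 1) = 2 ^ n * ((p - 2 ^ n) / 2 ^ n) + 2 ^ n := by
        ring
      rw [show 2 ^ n * ((p - 2 ^ n) / 2 ^ n + 1) + (p - 2 ^ n) % 2 ^ n = p by omega] at ha
      rw [ha, Nat.mod_eq_of_lt (show (p - 2 ^ n) / 2 ^ n + 1 < j + 2 by omega),
        bf_mid M n j _ (q := (p - 2 ^ n) / 2 ^ n + 1) (Nat.succ_ne_zero _) hq']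
      unfold vf
      by_cases h3 : (p - 2 ^ n) % 2 ^ n = 2 ^ n - 1
      · rw [if_pos h3, if_pos h3, h3]
      · rw [if_neg h3, if_neg h3]
    · rw [if_neg h2]
      have e2 : 2 ^ n * (j + 1) = 2 ^ n + j * 2 ^ n := by ring
      have ha := aval M n j (j + 1) (s := p - (2 ^ n + j * 2 ^ n)) (by omega)
      rw [show 2 ^ n * (j + 1) + (p - (2 ^ n + j * 2 ^ n)) = p by omega] at ha
      rw [ha, Nat.mod_eq_of_lt (show j + 1 < j + 2 by omega), bf_top]

lemma perA (M n j : ℕ) (hM : 1 ≤ M) (hn : 1 ≤ n) (hj : 1 ≤ j) :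
    per (lamWord M (2 ^ n) ++
        (List.replicate j (wordPlus (reflectWord M (lamWord M (2 ^ n))))).flatten ++
        reflectWord M (lamWord M (2 ^ n))) = aF M n j := by
  have hN : 0 < 2 ^ n := by positivity
  rw [big_eq M n j hM hn hj, per_mkw _ (by omega)]
  funext i
  show aF M n j (i % (2 ^ n + j * 2 ^ n + 2 ^ n)) = aF M n j i
  have hL : 2 ^ n + j * 2 ^ n + 2 ^ n = 2 ^ n * (j + 2) := by ring
  rw [hL]
  have hper := aF_per M n j (2 ^ n * (j + 2) * (i / (2 ^ n * (j + 2))))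
    (Nat.mul_mod_right _ _) (i % (2 ^ n * (j + 2)))
  conv_rhs => rw [← Nat.mod_add_div i (2 ^ n * (j + 2))]
  exact hper.symm

lemma xiHi (M n j : ℕ) (hM : 1 ≤ M) (hn : 1 ≤ n) (hj : 1 ≤ j) :
    SeqLt (aF M n j)
      (wordThen (lamWord M (2 ^ n))
        (per (wordPlus (reflectWord M (lamWord M (2 ^ n)))))) := by
  have hN : 0 < 2 ^ n := by positivity
  have hle : ∀ s, lam M s ≤ M := lam_le hM
  have e5 : 2 ^ n * (j + 2) = 2 ^ n * j + 2 ^ n + 2 ^ n := by ring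
  rw [lamWord_mkw, reflectWord_mkw, wordPlus_mkw _ hN, per_mkw _ hN]
  refine ⟨2 ^ n * (j + 2) - 1, fun i hi => ?_, ?_⟩
  · rw [wordThen_mkw]
    by_cases h1 : i < 2 ^ n
    · rw [if_pos h1, aF_small M n j h1]
    · rw [if_neg h1]
      have hd := Nat.div_add_mod (i - 2 ^ n) (2 ^ n)
      have hs := Nat.mod_lt (i - 2 ^ n) hN
      have e4 : 2 ^ n * (j + 1) = 2 ^ n * j + 2 ^ n := by ring
      have hq' : (i - 2 ^ n) / 2 ^ n < j + 1 := Nat.div_lt_of_lt_mul (by omega)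
      have ha := aval M n j ((i - 2 ^ n) / 2 ^ n + 1) hs
      have e2 : 2 ^ n * ((i - 2 ^ n) / 2 ^ n + 1) = 2 ^ n * ((i - 2 ^ n) / 2 ^ n) + 2 ^ n := by
        ring
      rw [show 2 ^ n * ((i - 2 ^ n) / 2 ^ n + 1) + (i - 2 ^ n) % 2 ^ n = i by omega] at ha
      rw [ha, Nat.mod_eq_of_lt (show (i - 2 ^ n) / 2 ^ n + 1 < j + 2 by omega)]
      by_cases hqj : (i - 2 ^ n) / 2 ^ n + 1 ≤ j
      · rw [bf_mid M n j _ (q := (i - 2 ^ n) / 2 ^ n + 1) (Nat.succ_ne_zero _) hqj]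
        unfold vf
        by_cases h3 : (i - 2 ^ n) % 2 ^ n = 2 ^ n - 1
        · rw [if_pos h3, if_pos h3, h3]
        · rw [if_neg h3, if_neg h3]
      · have hqe : (i - 2 ^ n) / 2 ^ n + 1 = j + 1 := by omega
        rw [hqe, bf_top]
        have e7 : 2 ^ n * ((i - 2 ^ n) / 2 ^ n) = 2 ^ n * j := by
          rw [show (i - 2 ^ n) / 2 ^ n = j by omega]
        rw [if_neg (by omega)]
  · rw [wordThen_mkw, if_neg (by omega)]
    have ha := aval M n j (j + 1) (s := 2 ^ n - 1) (by omega)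
    have e4 : 2 ^ n * (j + 1) = 2 ^ n * j + 2 ^ n := by ring
    rw [show 2 ^ n * (j + 1) + (2 ^ n - 1) = 2 ^ n * (j + 2) - 1 by omega] at ha
    rw [ha, Nat.mod_eq_of_lt (show j + 1 < j + 2 by omega), bf_top,
      show 2 ^ n * (j + 2) - 1 - 2 ^ n = 2 ^ n * j + (2 ^ n - 1) by omega,
      dmmod (by omega), if_pos rfl]
    have := hle (2 ^ n - 1)
    omega

lemma xiLo (M n j : ℕ) (hM : 1 ≤ M) (hn : 1 ≤ n) (hj : 1 ≤ j) :
    SeqLt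
      (wordThen (lamWord M (2 ^ (n + 1)))
        (per (wordPlus (reflectWord M (lamWord M (2 ^ (n + 1)))))))
      (aF M n j) := by
  have hN : 0 < 2 ^ n := by positivity
  have hN2 : 2 ≤ 2 ^ n := by
    calc (2:ℕ) = 2 ^ 1 := by norm_num
    _ ≤ 2 ^ n := Nat.pow_le_pow_right (by norm_num) hn
  have hN1 : 0 < 2 ^ (n + 1) := by positivity
  have he : 2 ^ (n + 1) = 2 ^ n + 2 ^ n := by ring
  have hle : ∀ s, lam M s ≤ M := lam_le hM
  have lastpos : 1 ≤ lam M (2 ^ n - 1) := lam_last_pos hM n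
  have fv : ∀ s, s < 2 ^ n → lam M (2 ^ n + s) = vf M n s := by
    intro s hs
    rw [lam_doub hM n s hs]
    unfold vf
    by_cases h : s = 2 ^ n - 1
    · rw [if_pos h, if_pos h, h]
    · rw [if_neg h, if_neg h]
  have f2last : lam M (2 ^ (n + 1) - 1) = M - lam M (2 ^ n - 1) + 1 := by
    have h9 := fv (2 ^ n - 1) (by omega)
    rw [show 2 ^ n + (2 ^ n - 1) = 2 ^ (n + 1) - 1 by omega] at h9
    rw [h9, vf_last]
  have pre2 : ∀ i, i < 2 ^ (n + 1) → aF M n j i = lam M i := by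
    intro i hi
    by_cases h1 : i < 2 ^ n
    · rw [aF_small M n j h1]
    · have h9 := aF_mid M n j hj (s := i - 2 ^ n) (by omega)
      rw [show 2 ^ n + (i - 2 ^ n) = i by omega] at h9
      have h8 := fv (i - 2 ^ n) (by omega)
      rw [show 2 ^ n + (i - 2 ^ n) = i by omega] at h8
      rw [h9, ← h8]
  have pv1 : ∀ e, e < 2 ^ n →
      (if e = 2 ^ (n + 1) - 1 then M - lam M e + 1 else M - lam M e) = M - lam M e := by
    intro e h1
    rw [if_neg (by omega)]
  have pv2 : ∀ e, 2 ^ n ≤ e → e < 2 ^ (n + 1) →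
      (if e = 2 ^ (n + 1) - 1 then M - lam M e + 1 else M - lam M e) = lam M (e - 2 ^ n) := by
    intro e h1 h2
    by_cases h3 : e = 2 ^ (n + 1) - 1
    · rw [if_pos h3, h3, f2last, show 2 ^ (n + 1) - 1 - 2 ^ n = 2 ^ n - 1 by omega]
      have := hle (2 ^ n - 1)
      omega
    · rw [if_neg h3]
      have h4 := fv (e - 2 ^ n) (by omega)
      rw [show 2 ^ n + (e - 2 ^ n) = e by omega] at h4
      rw [h4, vf_ne M n (by omega)]
      have := hle (e - 2 ^ n)
      omega
  rw [lamWord_mkw, reflectWord_mkw, wordPlus_mkw _ hN1, per_mkw _ hN1]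
  by_cases hj1 : j = 1
  · -- j = 1 : first difference at 5·2^n - 1
    subst hj1
    refine ⟨2 ^ n * 4 + (2 ^ n - 1), fun i hi => ?_, ?_⟩
    · rw [wordThen_mkw]
      by_cases h1 : i < 2 ^ (n + 1)
      · rw [if_pos h1, pre2 i h1]
      · rw [if_neg h1]
        by_cases h2 : i < 2 ^ n * 3
        · -- block `θ̄` of ξ, block q=2=j+1 of a
          rw [Nat.mod_eq_of_lt (show i - 2 ^ (n + 1) < 2 ^ (n + 1) by omega),
            pv1 _ (by omega)]
          have ha := aval M n 1 2 (s := i - 2 ^ n * 2) (by omega)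
          rw [show 2 ^ n * 2 + (i - 2 ^ n * 2) = i by omega] at ha
          rw [ha, show (2 : ℕ) % (1 + 2) = 2 by norm_num]
          have hb := bf_top M n 1 (i - 2 ^ n * 2)
          rw [show (1 : ℕ) + 1 = 2 by norm_num] at hb
          rw [hb, show i - 2 ^ (n + 1) = i - 2 ^ n * 2 by omega]
        · by_cases h3 : i < 2 ^ n * 4
          · -- block `θ` of ξ (second half of the reflected pair), block q=0 of a
            rw [Nat.mod_eq_of_lt (show i - 2 ^ (n + 1) < 2 ^ (n + 1) by omega),
              pv2 _ (by omega) (by omega)]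
            have ha := aval M n 1 3 (s := i - 2 ^ n * 3) (by omega)
            rw [show 2 ^ n * 3 + (i - 2 ^ n * 3) = i by omega] at ha
            rw [ha, show (3 : ℕ) % (1 + 2) = 0 by norm_num, bf_zero,
              show i - 2 ^ (n + 1) - 2 ^ n = i - 2 ^ n * 3 by omega]
          · -- block `θ̄` of ξ again, block q=1 of a
            rw [show i - 2 ^ (n + 1) = 2 ^ (n + 1) * 1 + (i - 2 ^ n * 4) by omega,
              dmmod (show i - 2 ^ n * 4 < 2 ^ (n + 1) by omega),
              pv1 _ (by omega)]
            have ha := aval M n 1 4 (s := i - 2 ^ n * 4) (by omega)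
            rw [show 2 ^ n * 4 + (i - 2 ^ n * 4) = i by omega] at ha
            rw [ha, show (4 : ℕ) % (1 + 2) = 1 by norm_num,
              bf_mid M n 1 _ one_ne_zero le_rfl, vf_ne M n (by omega)]
    · rw [wordThen_mkw, if_neg (by omega)]
      rw [show 2 ^ n * 4 + (2 ^ n - 1) - 2 ^ (n + 1) = 2 ^ (n + 1) * 1 + (2 ^ n - 1) by omega,
        dmmod (by omega), pv1 _ (by omega)]
      have ha := aval M n 1 4 (s := 2 ^ n - 1) (by omega)
      rw [ha, show (4 : ℕ) % (1 + 2) = 1 by norm_num,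
        bf_mid M n 1 _ one_ne_zero le_rfl, vf_last]
      have := hle (2 ^ n - 1)
      omega
  · -- j ≥ 2 : first difference at 3·2^n - 1
    have hj2 : 2 ≤ j := by omega
    refine ⟨2 ^ n * 2 + (2 ^ n - 1), fun i hi => ?_, ?_⟩
    · rw [wordThen_mkw]
      by_cases h1 : i < 2 ^ (n + 1)
      · rw [if_pos h1, pre2 i h1]
      · rw [if_neg h1]
        rw [Nat.mod_eq_of_lt (show i - 2 ^ (n + 1) < 2 ^ (n + 1) by omega),
          pv1 _ (by omega)]
        have ha := aval M n j 2 (s := i - 2 ^ n * 2) (by omega)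
        rw [show 2 ^ n * 2 + (i - 2 ^ n * 2) = i by omega] at ha
        rw [ha, Nat.mod_eq_of_lt (show 2 < j + 2 by omega), bf_mid M n j _ (by omega) hj2,
          vf_ne M n (by omega), show i - 2 ^ (n + 1) = i - 2 ^ n * 2 by omega]
    · rw [wordThen_mkw, if_neg (by omega)]
      rw [show 2 ^ n * 2 + (2 ^ n - 1) - 2 ^ (n + 1) = 2 ^ n - 1 by omega,
        Nat.mod_eq_of_lt (show 2 ^ n - 1 < 2 ^ (n + 1) by omega), pv1 _ (by omega)]
      have ha := aval M n j 2 (s := 2 ^ n - 1) (by omega)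
      rw [ha, Nat.mod_eq_of_lt (show 2 < j + 2 by omega), bf_mid M n j _ (by omega) hj2,
        vf_last]
      have := hle (2 ^ n - 1)
      omega

lemma finalStep (M n j : ℕ) (hM : 1 ≤ M) (hn : 1 ≤ n) (hj : 1 ≤ j) (j' : ℕ)
    (hj' : 2 * 2 ^ n < j') :
    SeqLt (wordThen (pre (aF M n j) j')
      (per (wordPlus (reflectWord M (pre (aF M n j) j'))))) (aF M n j) := by
  have hN : 0 < 2 ^ n := by positivity
  have hj0 : 0 < j' := by omega
  obtain ⟨d, hd2, hpre, hstr⟩ := lemA M n j hM hn hj j'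
  rw [pre_mkw, reflectWord_mkw, wordPlus_mkw _ hj0, per_mkw _ hj0]
  refine ⟨j' + d, fun i hi => ?_, ?_⟩
  · rw [wordThen_mkw]
    by_cases hij : i < j'
    · rw [if_pos hij]
    · rw [if_neg hij]
      rw [Nat.mod_eq_of_lt (show i - j' < j' by omega),
        if_neg (show ¬(i - j' = j' - 1) by omega)]
      have h5 := hpre (i - j') (by omega)
      rw [show (i - j') + j' = i by omega] at h5
      exact h5
  · rw [wordThen_mkw, if_neg (by omega)]
    rw [show j' + d - j' = d by omega, Nat.mod_eq_of_lt (show d < j' by omega),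
      if_neg (show ¬(d = j' - 1) by omega)]
    have h6 := hstr
    rw [show d + j' = j' + d by omega] at h6
    exact h6

end S14

/-- For all `n ≥ 1` and `j ≥ 1` the periodic sequence
`(λ_1…λ_{2^n} (\overline{λ_1…λ_{2^n}}⁺)^j \overline{λ_1…λ_{2^n}})^∞` is `*`-irreducible. -/


theorem statement14 (M : ℕ) (hM : 1 ≤ M) (n j : ℕ) (hn : 1 ≤ n) (hj : 1 ≤ j) :
    StarIrrSeq M (per (lamWord M (2 ^ n) ++
      (List.replicate j (wordPlus (reflectWord M (lamWord M (2 ^ n))))).flatten ++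
      reflectWord M (lamWord M (2 ^ n)))) := by
  rw [S14.perA M n j hM hn hj]
  have hN : 0 < 2 ^ n := by positivity
  have hAV : S14.aF M n j ∈ Vset M := by
    refine ⟨S14.aF_le M n j hM, fun r => ⟨?_, ?_⟩⟩
    · obtain ⟨d, hd2, hpre, hstr⟩ := S14.lemA M n j hM hn hj r
      exact Or.inl ⟨d, hpre, hstr⟩
    · exact S14.lemB M n j hM hn hj r
  refine ⟨hAV, ?_⟩
  by_cases hpar : M % 2 = 0
  · refine ⟨n + 1, by omega, ?_, ?_, ?_⟩
    · have hxl : xiLen M (n + 1 + 1) = 2 ^ (n + 1) := by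
        rw [xiLen, if_pos hpar, Nat.add_sub_cancel]
      unfold xi
      rw [hxl]
      exact Or.inl (S14.xiLo M n j hM hn hj)
    · have hxl : xiLen M (n + 1) = 2 ^ n := by
        rw [xiLen, if_pos hpar, Nat.add_sub_cancel]
      unfold xi
      rw [hxl]
      exact S14.xiHi M n j hM hn hj
    · intro j' _ _ h3
      rw [starThreshold, if_pos hpar] at h3
      have e : 2 ^ (n + 1) = 2 * 2 ^ n := by ring
      exact S14.finalStep M n j hM hn hj j' (by omega)
  · refine ⟨n, hn, ?_, ?_, ?_⟩
    · have hxl : xiLen M (n + 1) = 2 ^ (n + 1) := by rw [xiLen, if_neg hpar]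
      unfold xi
      rw [hxl]
      exact Or.inl (S14.xiLo M n j hM hn hj)
    · have hxl : xiLen M n = 2 ^ n := by rw [xiLen, if_neg hpar]
      unfold xi
      rw [hxl]
      exact S14.xiHi M n j hM hn hj
    · intro j' _ _ h3
      rw [starThreshold, if_neg hpar] at h3
      have e : 2 ^ (n + 1) = 2 * 2 ^ n := by ring
      exact S14.finalStep M n j hM hn hj j' (by omega)

end Paper
end

section
/- Let M ≥ 1 and let a = a_1…a_m and b = b_1…b_n be words with a_m < M and b_n < M such that (a_1…a_m)^∞ ∈ 𝐕 and (b_1…b_n)^∞ ∈ 𝐕. If (a_1…a_m)^∞ ≺ (b_1…b_n)^∞ ≺ a_1…a_m⁺(\overline{a_1…a_m})^∞, then b_1…b_n⁺(\overline{b_1…b_n})^∞ ≺ a_1…a_m⁺(\overline{a_1…a_m})^∞. -/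
namespace Paper

-- ===== auxiliary lemmas for Statement 16 =====


private lemma seqlt_trans {x y z : ℕ → ℕ} (h1 : SeqLt x y) (h2 : SeqLt y z) : SeqLt x z := by
  obtain ⟨s, hs, hs'⟩ := h1
  obtain ⟨t, ht, ht'⟩ := h2
  rcases lt_trichotomy s t with h | h | h
  · exact ⟨s, fun i hi => (hs i hi).trans (ht i (hi.trans h)), by have := ht s h; omega⟩
  · subst h
    exact ⟨s, fun i hi => (hs i hi).trans (ht i hi), hs'.trans ht'⟩
  · exact ⟨t, fun i hi => (hs i (hi.trans h)).trans (ht i hi), by have := hs t h; omega⟩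

private lemma seqlt_irrefl (x : ℕ → ℕ) : ¬ SeqLt x x := by
  rintro ⟨n, -, h⟩; omega

private lemma seqlt_asymm {x y : ℕ → ℕ} (h : SeqLt x y) (h' : SeqLt y x) : False :=
  seqlt_irrefl x (seqlt_trans h h')

private lemma seqlt_of_le_of_lt {x y z : ℕ → ℕ} (h : SeqLe x y) (h' : SeqLt y z) : SeqLt x z := by
  rcases h with h | rfl
  exacts [seqlt_trans h h', h']

private lemma seqlt_of_lt_of_le {x y z : ℕ → ℕ} (h : SeqLt x y) (h' : SeqLe y z) : SeqLt x z := by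
  rcases h' with h' | rfl
  exacts [seqlt_trans h h', h]

private lemma shiftn_comp (p q : ℕ) (x : ℕ → ℕ) : shiftn p (shiftn q x) = shiftn (p + q) x := by
  funext i
  simp only [shiftn]
  congr 1
  omega

private lemma reflect_shiftn (M k : ℕ) (x : ℕ → ℕ) :
    reflectSeq M (shiftn k x) = shiftn k (reflectSeq M x) := rfl

private lemma reflect_lt {M : ℕ} {x y : ℕ → ℕ} (hy : IsSeq M y) (h : SeqLt x y) :
    SeqLt (reflectSeq M y) (reflectSeq M x) := by
  obtain ⟨t, ht, ht'⟩ := h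
  exact ⟨t, fun i hi => by simp only [reflectSeq, ht i hi],
    by simp only [reflectSeq]; have := hy t; omega⟩

private lemma reflect_le {M : ℕ} {x y : ℕ → ℕ} (hy : IsSeq M y) (h : SeqLe x y) :
    SeqLe (reflectSeq M y) (reflectSeq M x) := by
  rcases h with h | rfl
  exacts [Or.inl (reflect_lt hy h), Or.inr rfl]

private lemma reflect_reflect {M : ℕ} {x : ℕ → ℕ} (hx : IsSeq M x) :
    reflectSeq M (reflectSeq M x) = x := by
  funext i
  have := hx i
  simp only [reflectSeq]
  omega

private lemma seqlt_of_shift {x y : ℕ → ℕ} {n : ℕ} (h0 : ∀ i < n, x i = y i)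
    (h : SeqLt (shiftn n x) (shiftn n y)) : SeqLt x y := by
  obtain ⟨t, ht, ht'⟩ := h
  simp only [shiftn] at ht ht'
  refine ⟨n + t, fun i hi => ?_, ?_⟩
  · by_cases hin : i < n
    · exact h0 i hin
    · have h3 := ht (i - n) (by omega)
      have e : i - n + n = i := by omega
      rwa [e] at h3
  · have e : t + n = n + t := by omega
    rwa [e] at ht'

private lemma shift_of_seqlt {x y : ℕ → ℕ} {n : ℕ} (h : SeqLt x y) (h0 : ∀ i < n, x i = y i) :
    SeqLt (shiftn n x) (shiftn n y) := by
  obtain ⟨t, ht, ht'⟩ := h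
  have hnt : n ≤ t := by
    by_contra hc
    have := h0 t (by omega)
    omega
  refine ⟨t - n, fun i hi => ht _ (by omega), ?_⟩
  show x (t - n + n) < y (t - n + n)
  have e : t - n + n = t := by omega
  rw [e]
  exact ht'

private lemma per_period (w : List ℕ) (i : ℕ) : per w (i + w.length) = per w i := by
  simp [per, Nat.add_mod_right]

private lemma shiftn_per (w : List ℕ) : shiftn w.length (per w) = per w :=
  funext fun i => per_period w i

private lemma per_getD (w : List ℕ) {i : ℕ} (hi : i < w.length) : per w i = w.getD i 0 := by
  simp [per, Nat.mod_eq_of_lt hi]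

private lemma seq_period_mul {x : ℕ → ℕ} {p : ℕ} (hx : ∀ i, x (i + p) = x i) :
    ∀ q i, x (i + q * p) = x i := by
  intro q
  induction q with
  | zero => simp
  | succ q ih =>
    intro i
    have e : i + (q + 1) * p = (i + q * p) + p := by ring
    rw [e, hx, ih]

private lemma seq_period_mod {x : ℕ → ℕ} {p : ℕ} (hp : 0 < p) (hx : ∀ i, x (i + p) = x i)
    (i : ℕ) : x i = x (i % p) := by
  conv_lhs => rw [← Nat.mod_add_div' i p]
  rw [seq_period_mul hx]

private lemma seq_eq_of_period {x y : ℕ → ℕ} {p : ℕ} (hp : 0 < p)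
    (hx : ∀ i, x (i + p) = x i) (hy : ∀ i, y (i + p) = y i) (h : ∀ i < p, x i = y i) :
    x = y := by
  funext i
  rw [seq_period_mod hp hx i, seq_period_mod hp hy i]
  exact h _ (Nat.mod_lt _ hp)

private lemma length_wordPlus {w : List ℕ} (hw : w ≠ []) : (wordPlus w).length = w.length := by
  have := List.length_pos_iff.mpr hw
  simp [wordPlus, List.length_dropLast]
  omega

private lemma getLastD_eq (w : List ℕ) : w.getLastD 0 = w.getD (w.length - 1) 0 := by
  rw [List.getLastD_eq_getLast?, List.getLast?_eq_getElem?]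
  simp [List.getD_eq_getElem?_getD]

private lemma wordThen_plus_lt {w : List ℕ} (z : ℕ → ℕ) (hw : w ≠ []) {i : ℕ}
    (hi : i + 1 < w.length) : wordThen (wordPlus w) z i = per w i := by
  have hl := length_wordPlus hw
  have h1 : i < (wordPlus w).length := by omega
  simp only [wordThen, if_pos h1]
  rw [wordPlus, List.getD_append _ _ _ _ (by simp [List.length_dropLast]; omega)]
  have h2 : i < w.dropLast.length := by simp [List.length_dropLast]; omega
  rw [List.getD_eq_getElem _ _ h2, List.getElem_dropLast, ← List.getD_eq_getElem,
    per_getD w (show i < w.length by omega)]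

private lemma wordThen_plus_last {w : List ℕ} (z : ℕ → ℕ) (hw : w ≠ []) :
    wordThen (wordPlus w) z (w.length - 1) = per w (w.length - 1) + 1 := by
  have hwl := List.length_pos_iff.mpr hw
  have hl := length_wordPlus hw
  have h1 : w.length - 1 < (wordPlus w).length := by omega
  simp only [wordThen, if_pos h1]
  rw [wordPlus, List.getD_append_right _ _ _ _ (by simp [List.length_dropLast])]
  simp only [List.length_dropLast, Nat.sub_self, List.getD_cons_zero]
  rw [getLastD_eq, per_getD w (by omega)]

private lemma shiftn_wordThen_plus (M : ℕ) {w : List ℕ} (hw : w ≠ []) :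
    shiftn w.length (wordThen (wordPlus w) (per (reflectWord M w))) = reflectSeq M (per w) := by
  have hwl := List.length_pos_iff.mpr hw
  have hl := length_wordPlus hw
  funext i
  show wordThen (wordPlus w) (per (reflectWord M w)) (i + w.length) = _
  have h1 : ¬ (i + w.length < (wordPlus w).length) := by omega
  simp only [wordThen, if_neg h1]
  have e : i + w.length - (wordPlus w).length = i := by omega
  rw [e]
  have hrl : (reflectWord M w).length = w.length := by simp [reflectWord]
  have h2 : i % w.length < w.length := Nat.mod_lt _ hwl
  simp only [per, reflectSeq, hrl]
  rw [List.getD_eq_getElem _ _ (show i % w.length < (reflectWord M w).length by omega),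
    List.getD_eq_getElem _ _ h2]
  simp [reflectWord]


private lemma caseY_abs (M : ℕ) (α A : ℕ → ℕ) (m : ℕ) (hm : 0 < m)
    (hαper : ∀ i, α (i + m) = α i)
    (hαA : ∀ i, i + 1 < m → A i = α i)
    (hAm : A (m - 1) = α (m - 1) + 1)
    (hshiftA : shiftn m A = reflectSeq M α)
    (hVα1 : IsSeq M α)
    (hVα : ∀ j, SeqLe (reflectSeq M α) (shiftn j α) ∧ SeqLe (shiftn j α) α)
    (n : ℕ) (hn : 0 < n) (β : ℕ → ℕ)
    (hβper : ∀ i, β (i + n) = β i)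
    (hVβ : ∀ j, SeqLe (shiftn j β) β)
    (h1 : SeqLt α β) (h2 : SeqLt β A) (hpre : ∀ i < n, A i = β i) : False := by
  have hshiftβ : shiftn n β = β := funext fun i => hβper i
  by_cases hnm : m ≤ n
  · -- n ≥ m : β ≺ σⁿA ≼ α ≺ β
    have h3 : SeqLt β (shiftn n A) := by
      have h4 := shift_of_seqlt h2 (fun i hi => (hpre i hi).symm)
      rwa [hshiftβ] at h4
    have e : n - m + m = n := by omega
    have h4 : shiftn n A = reflectSeq M (shiftn (n - m) α) := by
      have h5 := shiftn_comp (n - m) m A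
      rw [hshiftA, e] at h5
      rw [← reflect_shiftn] at h5
      exact h5.symm
    have h5 : SeqLe (shiftn n A) α := by
      rw [h4]
      have h6 := reflect_le (M := M) (y := shiftn (n - m) α) (fun i => hVα1 _) (hVα (n - m)).1
      rwa [reflect_reflect hVα1] at h6
    exact seqlt_irrefl β (seqlt_trans (seqlt_of_lt_of_le h3 h5) h1)
  · push_neg at hnm
    -- n < m
    have hβα_n : ∀ i < n, β i = α i := fun i hi =>
      (hpre i hi).symm.trans (hαA i (by omega))
    have hβA : SeqLt β (shiftn n A) := by
      have h4 := shift_of_seqlt h2 (fun i hi => (hpre i hi).symm)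
      rwa [hshiftβ] at h4
    have hαβ : SeqLt (shiftn n α) β := seqlt_of_le_of_lt (hVα n).2 h1
    obtain ⟨t, hT, hT'⟩ := hαβ
    obtain ⟨K, hK, hK'⟩ := hβA
    simp only [shiftn] at hT hT' hK hK'
    have hclaimK : m - n - 1 ≤ K := by
      by_contra hc
      push_neg at hc
      rcases lt_trichotomy K t with h | h | h
      · have h5 := hT K h
        have h6 := hαA (K + n) (by omega)
        omega
      · subst h
        have h6 := hαA (K + n) (by omega)
        omega
      · have h5 := hK t h
        have h6 := hαA (t + n) (by omega)
        omega
    have hclaimT : m - n - 1 ≤ t := by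
      by_contra hc
      push_neg at hc
      rcases lt_or_ge t K with h | h
      · have h5 := hK t h
        have h6 := hαA (t + n) (by omega)
        omega
      · omega
    have hagree : ∀ i, i < m - n - 1 → β i = α (i + n) := by
      intro i hi
      have h3 := hK i (by omega)
      have h4 := hαA (i + n) (by omega)
      omega
    have hidx : m - n - 1 + n = m - 1 := by omega
    have hval : β (m - n - 1) = α (m - 1) ∨ β (m - n - 1) = α (m - 1) + 1 := by
      have hub : β (m - n - 1) ≤ α (m - 1) + 1 := by
        rcases eq_or_lt_of_le hclaimK with h | h
        · have h5 := hK'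
          have e : K + n = m - 1 := by omega
          rw [e, hAm] at h5
          rw [← h] at h5
          omega
        · have h5 := hK (m - n - 1) h
          rw [hidx, hAm] at h5
          omega
      have hlb : α (m - 1) ≤ β (m - n - 1) := by
        rcases eq_or_lt_of_le hclaimT with h | h
        · have h5 := hT'
          rw [← h, hidx] at h5
          omega
        · have h5 := hT (m - n - 1) h
          rw [hidx] at h5
          omega
      omega
    have hcomp : shiftn m β = shiftn (m - n) β := by
      have e3 : m - n + n = m := by omega
      calc shiftn m β = shiftn (m - n + n) β := by rw [e3]
      _ = shiftn (m - n) (shiftn n β) := (shiftn_comp _ _ _).symm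
      _ = shiftn (m - n) β := by rw [hshiftβ]
    rcases hval with hlast | hlast2
    · -- sub-subcase 1 : β (m-n-1) = α (m-1)
      have hαβm : ∀ j < m, α j = β j := by
        intro j hj
        rcases lt_or_ge j n with h | h
        · exact (hβα_n j h).symm
        · have e : j - n + n = j := by omega
          have hper := hβper (j - n)
          rw [e] at hper
          rcases lt_or_ge (j - n) (m - n - 1) with h' | h'
          · have h3 := hagree (j - n) h'
            rw [e] at h3
            omega
          · have hj' : j - n = m - n - 1 := by omega
            rw [hj'] at hper
            have hjm : j = m - 1 := by omega
            rw [hjm] at hper ⊢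
            omega
      have hγlt : SeqLt α (shiftn (m - n) β) := by
        have h3 := shift_of_seqlt h1 hαβm
        have e1 : shiftn m α = α := funext fun i => hαper i
        rw [e1, hcomp] at h3
        exact h3
      rcases hVβ (m - n) with h4 | h4
      · -- σ^{m-n} β ≺ β
        obtain ⟨e, hE, hE'⟩ := h4
        obtain ⟨d, hD, hD'⟩ := hγlt
        simp only [shiftn] at hE hE' hD hD'
        have hem : m ≤ e := by
          by_contra hc
          push_neg at hc
          rcases lt_trichotomy d e with h | h | h
          · have h5 := hE d (by omega)
            have h6 := hαβm d (by omega)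
            omega
          · subst h
            have h6 := hαβm d (by omega)
            omega
          · have h5 := hD e h
            have h6 := hαβm e (by omega)
            omega
        have hγper : ∀ i, (shiftn (m - n) β) (i + n) = (shiftn (m - n) β) i := by
          intro i
          show β ((i + n) + (m - n)) = β (i + (m - n))
          have e3 : i + n + (m - n) = (i + (m - n)) + n := by omega
          rw [e3, hβper]
        have hγβ : shiftn (m - n) β = β :=
          seq_eq_of_period hn hγper hβper (fun i hi => hE i (by omega))
        have h5 := congrFun hγβ e
        simp only [shiftn] at h5
        omega
      · -- σ^{m-n} β = β  ⟹  β has period m ⟹ α = β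
        have hβperm : ∀ i, β (i + m) = β i := by
          intro i
          have e3 : i + m = (i + (m - n)) + n := by omega
          rw [e3, hβper]
          exact congrFun h4 i
        have hαβeq : α = β := seq_eq_of_period hm hαper hβperm hαβm
        rw [hαβeq] at h1
        exact seqlt_irrefl β h1
    · -- sub-subcase 2 : β (m-n-1) = α (m-1) + 1
      have hβA_m : ∀ j < m, β j = A j := by
        intro j hj
        rcases lt_or_ge j n with h | h
        · exact (hpre j h).symm
        · have e : j - n + n = j := by omega
          have hper := hβper (j - n)
          rw [e] at hper
          rcases lt_or_ge (j - n) (m - n - 1) with h' | h'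
          · have h3 := hagree (j - n) h'
            rw [e] at h3
            have h4 := hαA j (by omega)
            omega
          · have hj' : j - n = m - n - 1 := by omega
            rw [hj'] at hper
            have hjm : j = m - 1 := by omega
            rw [hjm] at hper ⊢
            rw [hAm]
            omega
      have h3 := shift_of_seqlt h2 hβA_m
      rw [hshiftA, hcomp] at h3
      have h5 : SeqLt (shiftn (m - n) α) (shiftn (m - n) β) := by
        refine ⟨n - 1, fun i hi => ?_, ?_⟩
        · show α (i + (m - n)) = β (i + (m - n))
          have h6 := hβA_m (i + (m - n)) (by omega)
          have h7 := hαA (i + (m - n)) (by omega)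
          omega
        · show α (n - 1 + (m - n)) < β (n - 1 + (m - n))
          have e3 : n - 1 + (m - n) = m - 1 := by omega
          rw [e3]
          have hper := hβper (m - n - 1)
          rw [hidx] at hper
          omega
      have h6 : SeqLe (reflectSeq M α) (shiftn (m - n) α) := (hVα (m - n)).1
      exact seqlt_irrefl _ (seqlt_trans (seqlt_of_le_of_lt h6 h5) h3)

private lemma exists_min_diff {x y : ℕ → ℕ} {n : ℕ} (h : ∃ i, i < n ∧ x i ≠ y i) :
    ∃ j, j < n ∧ x j ≠ y j ∧ ∀ i < j, x i = y i := by
  classical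
  have hfn := (Nat.find_spec h).1
  refine ⟨Nat.find h, hfn, (Nat.find_spec h).2, fun i hi => ?_⟩
  have h3 := Nat.find_min h hi
  push_neg at h3
  exact h3 (by omega)


/-- If `(a_1…a_m)^∞, (b_1…b_n)^∞ ∈ 𝐕` and
`(a_1…a_m)^∞ ≺ (b_1…b_n)^∞ ≺ a_1…a_m⁺(ā)^∞`, then
`b_1…b_n⁺(b̄)^∞ ≺ a_1…a_m⁺(ā)^∞`. -/
theorem statement16 (M : ℕ) (hM : 1 ≤ M) (a b : List ℕ) (ha : a ≠ []) (hb : b ≠ [])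
    (hda : ∀ d ∈ a, d ≤ M) (hdb : ∀ d ∈ b, d ≤ M)
    (hla : a.getLastD 0 < M) (hlb : b.getLastD 0 < M)
    (hVa : per a ∈ Vset M) (hVb : per b ∈ Vset M)
    (h1 : SeqLt (per a) (per b))
    (h2 : SeqLt (per b) (wordThen (wordPlus a) (per (reflectWord M a)))) :
    SeqLt (wordThen (wordPlus b) (per (reflectWord M b)))
      (wordThen (wordPlus a) (per (reflectWord M a))) := by
  obtain ⟨hVa1, hVa2⟩ := hVa
  obtain ⟨hVb1, hVb2⟩ := hVb
  have hm : 0 < a.length := List.length_pos_iff.mpr ha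
  have hn : 0 < b.length := List.length_pos_iff.mpr hb
  have hαA : ∀ i, i + 1 < a.length →
      wordThen (wordPlus a) (per (reflectWord M a)) i = per a i :=
    fun i hi => wordThen_plus_lt _ ha hi
  have hAm := wordThen_plus_last (per (reflectWord M a)) ha
  have hshiftA := shiftn_wordThen_plus M ha
  have hβB : ∀ i, i + 1 < b.length →
      wordThen (wordPlus b) (per (reflectWord M b)) i = per b i :=
    fun i hi => wordThen_plus_lt _ hb hi
  have hBn := wordThen_plus_last (per (reflectWord M b)) hb
  have hshiftB := shiftn_wordThen_plus M hb
  by_cases hAB : ∀ i < b.length, wordThen (wordPlus b) (per (reflectWord M b)) i =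
      wordThen (wordPlus a) (per (reflectWord M a)) i
  · -- case X : A starts with b⁺
    by_cases hnm : b.length < a.length
    · -- then β ≺ α, contradiction
      exfalso
      have hltβα : SeqLt (per b) (per a) := by
        refine ⟨b.length - 1, fun i hi => ?_, ?_⟩
        · have h3 := hAB i (by omega)
          have h4 := hβB i (by omega)
          have h5 := hαA i (by omega)
          omega
        · have h3 := hAB (b.length - 1) (by omega)
          rw [hBn] at h3
          have h5 := hαA (b.length - 1) (by omega)
          omega
      exact seqlt_asymm h1 hltβα
    · push_neg at hnm
      refine seqlt_of_shift (n := b.length) hAB ?_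
      rw [hshiftB]
      have e : b.length - a.length + a.length = b.length := by omega
      have h4 : shiftn b.length (wordThen (wordPlus a) (per (reflectWord M a))) =
          reflectSeq M (shiftn (b.length - a.length) (per a)) := by
        have h5 := shiftn_comp (b.length - a.length) a.length
          (wordThen (wordPlus a) (per (reflectWord M a)))
        rw [hshiftA, e] at h5
        rw [← reflect_shiftn] at h5
        exact h5.symm
      rw [h4]
      exact reflect_lt hVb1 (seqlt_of_le_of_lt (hVa2 (b.length - a.length)).2 h1)
  · push_neg at hAB
    obtain ⟨j, hjn, hjne, hjmin⟩ := exists_min_diff hAB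
    rcases lt_trichotomy (wordThen (wordPlus b) (per (reflectWord M b)) j)
      (wordThen (wordPlus a) (per (reflectWord M a)) j) with hlt | heq | hgt
    · exact ⟨j, hjmin, hlt⟩
    · exact absurd heq hjne
    · exfalso
      rcases lt_or_ge j (b.length - 1) with hjlt | hjge
      · -- A ≺ β, contradiction with h2
        have h3 := hβB j (by omega)
        refine seqlt_asymm h2 ⟨j, fun i hi => ?_, ?_⟩
        · have h4 := hjmin i hi
          have h5 := hβB i (by omega)
          omega
        · omega
      · have hjeq : j = b.length - 1 := by omega
        subst hjeq
        rw [hBn] at hgt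
        rcases lt_or_eq_of_le (show wordThen (wordPlus a) (per (reflectWord M a))
            (b.length - 1) ≤ per b (b.length - 1) from by omega) with hlt2 | heq2
        · -- A ≺ β, contradiction with h2
          refine seqlt_asymm h2 ⟨b.length - 1, fun i hi => ?_, ?_⟩
          · have h4 := hjmin i hi
            have h5 := hβB i (by omega)
            omega
          · omega
        · -- A starts with b : case Y
          refine caseY_abs M (per a) (wordThen (wordPlus a) (per (reflectWord M a)))
            a.length hm (per_period a) hαA hAm hshiftA hVa1 hVa2
            b.length hn (per b) (per_period b) (fun j => (hVb2 j).2) h1 h2 ?_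
          intro i hi
          rcases lt_or_ge i (b.length - 1) with h | h
          · have h4 := hjmin i h
            have h5 := hβB i (by omega)
            omega
          · have : i = b.length - 1 := by omega
            rw [this]
            omega

end Paper
end

section
/- Let M ≥ 1 and N ≥ 2, and let 𝐈_N be the set of sequences a such that a_1…a_{2N} = M^{2N−1}0 (2N−1 copies of the digit M followed by the digit 0) and 0^N ≺ a_{sN+1}…a_{sN+N} ≺ M^N for every s ≥ 2. Then every a ∈ 𝐈_N satisfies ā ≺ σ^n(a) ≺ a for all n ≥ 1 (in particular a ∈ 𝐕) and is irreducible. -/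
namespace Paper

/-- Auxiliary lemmas for statement18. -/
lemma not_wordLt_self (l : List ℕ) : ¬ WordLt l l := by
  induction l with
  | nil => intro h; cases h
  | cons x xs ih =>
    intro h
    cases h with
    | cons h => exact ih h
    | rel h => exact lt_irrefl _ h

lemma pre_length18 (a : ℕ → ℕ) (j : ℕ) : (pre a j).length = j := by simp [pre, factor]

lemma pre_getD18 (a : ℕ → ℕ) {t j : ℕ} (h : t < j) : (pre a j).getD t 0 = a t := by
  simp [pre, factor, List.getD, h]

lemma pre_succ18 (a : ℕ → ℕ) (j : ℕ) : pre a (j+1) = pre a j ++ [a j] := by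
  simp [pre, factor, List.range_succ]

lemma wordPlus_concat18 (l : List ℕ) (b : ℕ) : wordPlus (l ++ [b]) = l ++ [b+1] := by
  simp [wordPlus, List.dropLast_concat, List.getLastD_concat]

lemma wordMinus_concat18 (l : List ℕ) (b : ℕ) : wordMinus (l ++ [b]) = l ++ [b-1] := by
  simp [wordMinus, List.dropLast_concat, List.getLastD_concat]

lemma reflect_concat18 (M : ℕ) (l : List ℕ) (b : ℕ) :
    reflectWord M (l ++ [b]) = reflectWord M l ++ [M - b] := by
  simp [reflectWord]

lemma refl_pre_getD18 (M : ℕ) (a : ℕ → ℕ) {u k : ℕ} (h : u < k) :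
    (reflectWord M (pre a k)).getD u 0 = M - a u := by
  simp [reflectWord, pre, factor, List.getD, h]

lemma refl_pre_length18 (M : ℕ) (a : ℕ → ℕ) (k : ℕ) :
    (reflectWord M (pre a k)).length = k := by
  simp [reflectWord, pre, factor]

lemma vform18 (M : ℕ) (a : ℕ → ℕ) (k : ℕ) :
    wordPlus (reflectWord M (pre a (k+1))) = reflectWord M (pre a k) ++ [(M - a k) + 1] := by
  rw [pre_succ18, reflect_concat18, wordPlus_concat18]

/-- Every `a ∈ 𝐈_N` satisfies `ā ≺ σⁿ(a) ≺ a` for all `n ≥ 1`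
(in particular `a ∈ 𝐕`) and is irreducible. -/
theorem statement18 (M N : ℕ) (hM : 1 ≤ M) (hN : 2 ≤ N) (a : ℕ → ℕ) (ha : a ∈ INset M N) :
    (∀ n, 1 ≤ n → SeqLt (reflectSeq M a) (shiftn n a) ∧ SeqLt (shiftn n a) a) ∧
      a ∈ Vset M ∧ IrrSeq M a := by
  obtain ⟨hseq, hpre, hblk⟩ := ha
  -- digit facts about the prefix
  have haM : ∀ t, t < 2*N - 1 → a t = M := by
    intro t ht
    have h : (pre a (2*N)).getD t 0 = (List.replicate (2*N-1) M ++ [0]).getD t 0 := by rw [hpre]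
    rw [pre_getD18 a (by omega : t < 2*N),
      List.getD_append _ _ _ _ (by simpa using ht)] at h
    simpa [List.getD, ht] using h
  have ha0 : a (2*N - 1) = 0 := by
    have h : (pre a (2*N)).getD (2*N-1) 0
        = (List.replicate (2*N-1) M ++ [0]).getD (2*N-1) 0 := by rw [hpre]
    rw [pre_getD18 a (by omega : 2*N-1 < 2*N),
      List.getD_append_right _ _ _ _ (by simp)] at h
    simpa using h
  -- block facts
  have hblk0 : ∀ s, 2 ≤ s → ∃ p, p < N ∧ a (s*N + p) ≠ 0 := by
    intro s hs
    by_contra hcon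
    push_neg at hcon
    have heq : factor a (s*N) N = List.replicate N 0 := by
      refine List.eq_replicate_iff.mpr ⟨by simp [factor], ?_⟩
      intro b hb
      simp only [factor, List.mem_map, List.mem_range] at hb
      obtain ⟨p, hp, rfl⟩ := hb
      exact hcon p hp
    have h := (hblk s hs).1
    rw [heq] at h
    exact not_wordLt_self _ h
  have hblkM : ∀ s, 2 ≤ s → ∃ p, p < N ∧ a (s*N + p) ≠ M := by
    intro s hs
    by_contra hcon
    push_neg at hcon
    have heq : factor a (s*N) N = List.replicate N M := by
      refine List.eq_replicate_iff.mpr ⟨by simp [factor], ?_⟩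
      intro b hb
      simp only [factor, List.mem_map, List.mem_range] at hb
      obtain ⟨p, hp, rfl⟩ := hb
      exact hcon p hp
    have h := (hblk s hs).2
    rw [heq] at h
    exact not_wordLt_self _ h
  -- a multiple of N inside every window of length N beyond 2N-1
  have exmult : ∀ n, 2*N - 1 ≤ n → ∃ s, 2 ≤ s ∧ n ≤ s*N ∧ s*N < n + N := by
    intro n hn
    obtain ⟨q, r, h1, h2⟩ : ∃ q r, N*q + r = n+N-1 ∧ r < N :=
      ⟨_, _, Nat.div_add_mod _ _, Nat.mod_lt _ (by omega)⟩
    refine ⟨q, ?_, ?_, ?_⟩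
    · by_contra hs
      push_neg at hs
      have h3 : N*q ≤ N*1 := Nat.mul_le_mul_left N (by omega)
      omega
    · rw [mul_comm]; omega
    · rw [mul_comm]; omega
  -- every window of length 2N-1 beyond position 1 has a digit < M
  have starM : ∀ n, 1 ≤ n → ∃ i, i ≤ 2*N - 2 ∧ a (n + i) ≠ M := by
    intro n hn
    rcases Nat.lt_or_ge n (2*N) with h | h
    · exact ⟨2*N-1-n, by omega, by
        rw [show n + (2*N-1-n) = 2*N-1 by omega, ha0]; omega⟩
    · obtain ⟨s, hs2, hsl, hsr⟩ := exmult n (by omega)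
      obtain ⟨p, hp, hap⟩ := hblkM s hs2
      exact ⟨s*N + p - n, by omega, by rw [show n + (s*N+p-n) = s*N+p by omega]; exact hap⟩
  -- every window of length 2N-1 beyond position 1 has a digit > 0
  have star0 : ∀ n, 1 ≤ n → ∃ i, i ≤ 2*N - 2 ∧ a (n + i) ≠ 0 := by
    intro n hn
    rcases Nat.lt_or_ge n (2*N-1) with h | h
    · exact ⟨0, by omega, by rw [Nat.add_zero, haM n h]; omega⟩
    · obtain ⟨s, hs2, hsl, hsr⟩ := exmult n h
      obtain ⟨p, hp, hap⟩ := hblk0 s hs2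
      exact ⟨s*N + p - n, by omega, by rw [show n + (s*N+p-n) = s*N+p by omega]; exact hap⟩
  -- strict inequalities
  have G2 : ∀ n, 1 ≤ n → SeqLt (shiftn n a) a := by
    intro n hn
    obtain ⟨i0, hi0, hne0⟩ := starM n hn
    have hex : ∃ i, a (n + i) ≠ M := ⟨i0, hne0⟩
    obtain ⟨i, hi, hspec, hmin⟩ : ∃ i, i ≤ 2*N-2 ∧ a (n+i) ≠ M ∧ ∀ t, t < i → a (n+t) = M :=
      ⟨Nat.find hex, le_trans (Nat.find_min' hex hne0) hi0, Nat.find_spec hex,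
        fun t ht => by simpa using Nat.find_min hex ht⟩
    refine ⟨i, ?_, ?_⟩
    · intro t ht
      show a (t + n) = a t
      rw [Nat.add_comm, hmin t ht, haM t (by omega)]
    · show a (i + n) < a i
      rw [Nat.add_comm, haM i (by omega)]
      exact lt_of_le_of_ne (hseq _) hspec
  have G1 : ∀ n, 1 ≤ n → SeqLt (reflectSeq M a) (shiftn n a) := by
    intro n hn
    obtain ⟨i0, hi0, hne0⟩ := star0 n hn
    have hex : ∃ i, a (n + i) ≠ 0 := ⟨i0, hne0⟩
    obtain ⟨i, hi, hspec, hmin⟩ : ∃ i, i ≤ 2*N-2 ∧ a (n+i) ≠ 0 ∧ ∀ t, t < i → a (n+t) = 0 :=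
      ⟨Nat.find hex, le_trans (Nat.find_min' hex hne0) hi0, Nat.find_spec hex,
        fun t ht => by simpa using Nat.find_min hex ht⟩
    refine ⟨i, ?_, ?_⟩
    · intro t ht
      show M - a t = a (t + n)
      rw [haM t (by omega), Nat.add_comm, hmin t ht, Nat.sub_self]
    · show M - a i < a (i + n)
      rw [haM i (by omega), Nat.sub_self, Nat.add_comm]
      omega
  have hV : a ∈ Vset M := by
    refine ⟨hseq, fun n => ?_⟩
    rcases Nat.eq_zero_or_pos n with rfl | hn
    · constructor
      · left
        refine ⟨0, fun i h => absurd h (Nat.not_lt_zero i), ?_⟩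
        show M - a 0 < a 0
        rw [haM 0 (by omega)]
        omega
      · right
        funext i
        show a (i + 0) = a i
        rw [Nat.add_zero]
    · exact ⟨Or.inl (G1 n hn), Or.inl (G2 n hn)⟩
  have hIrr : IrrSeq M a := by
    refine ⟨hV, ?_⟩
    intro j hj1 hja hVm
    obtain ⟨k, rfl⟩ : ∃ k, j = k + 1 := ⟨j - 1, by omega⟩
    have hja' : 1 ≤ a k := by simpa using hja
    have hvform := vform18 M a k
    set v := wordPlus (reflectWord M (pre a (k+1))) with hv
    have hvlen : v.length = k + 1 := by
      rw [hvform]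
      simp [refl_pre_length18]
    have hvgetD : ∀ u, u < k → v.getD u 0 = M - a u := by
      intro u hu
      rw [hvform, List.getD_append _ _ _ _ (by rw [refl_pre_length18]; exact hu)]
      exact refl_pre_getD18 M a hu
    have hvlast : v.getD k 0 = M - a k + 1 := by
      rw [hvform, List.getD_append_right _ _ _ _ (by rw [refl_pre_length18])]
      simp [refl_pre_length18]
    set x := wordThen (pre a (k+1)) (per v) with hx
    have hprelen : (pre a (k+1)).length = k + 1 := pre_length18 a (k+1)
    have hxlow : ∀ t, t < k + 1 → x t = a t := by
      intro t ht
      rw [hx]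
      simp only [wordThen, hprelen, if_pos ht]
      exact pre_getD18 a ht
    have hxhigh : ∀ t, k + 1 ≤ t → x t = v.getD ((t - (k+1)) % (k+1)) 0 := by
      intro t ht
      rw [hx]
      simp only [wordThen, hprelen, if_neg (by omega : ¬ t < k+1), per, hvlen]
    rcases Nat.lt_trichotomy (k+1) (2*N-1) with hlt | heq | hgt
    · -- case j < 2N-1
      rcases Nat.eq_zero_or_pos k with rfl | hk
      · -- case j = 1 : need M ≥ 2, from the hypothesis hVm
        have ha0M : a 0 = M := haM 0 (by omega)
        have hwm : wordMinus (pre a 1) = [M - 1] := by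
          have h1 : pre a 1 = [] ++ [a 0] := by simp [pre, factor, List.range_succ]
          rw [h1, wordMinus_concat18, ha0M]
          simp
        have hper : ∀ n, per (wordMinus (pre a 1)) n = M - 1 := by
          intro n
          rw [hwm]
          simp [per, Nat.mod_one]
        have hM2 : 2 ≤ M := by
          have h := (hVm.2 0).1
          rcases h with ⟨n, _, hlt2⟩ | heq2
          · simp only [reflectSeq, shiftn, hper] at hlt2
            omega
          · have h2 := congrFun heq2 0
            simp only [reflectSeq, shiftn, hper] at h2
            omega
        refine ⟨1, fun t ht => hxlow t (by omega), ?_⟩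
        have h1 : x 1 = M - a 0 + 1 := by
          rw [hxhigh 1 le_rfl]
          simpa using hvlast
        rw [h1, ha0M, haM 1 (by omega), Nat.sub_self]
        omega
      · -- case 2 ≤ j ≤ 2N-2
        refine ⟨k+1, fun t ht => hxlow t ht, ?_⟩
        rw [hxhigh (k+1) le_rfl]
        simp only [Nat.sub_self, Nat.zero_mod]
        rw [hvgetD 0 hk, haM 0 (by omega), Nat.sub_self, haM (k+1) (by omega)]
        omega
    · -- case j = 2N-1, the delicate case
      have hv0 : ∀ u, u < k → v.getD u 0 = 0 := by
        intro u hu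
        rw [hvgetD u hu, haM u (by omega), Nat.sub_self]
      have hv1 : v.getD k 0 = 1 := by
        rw [hvlast, haM k (by omega), Nat.sub_self]
      have hne : ∃ t, x t ≠ a t := by
        by_contra hcon
        push_neg at hcon
        obtain ⟨p, hp, hap⟩ := hblk0 (2*N-1) (by omega)
        apply hap
        have hP : 2*N-1 ≤ (2*N-1)*N := Nat.le_mul_of_pos_right _ (by omega)
        have hNsplit : (2*N-1)*N = (2*N-1)*(N-1) + (2*N-1) := by
          rw [← Nat.mul_succ]
          congr 1
          omega
        have hmod : ((2*N-1)*N + p - (k+1)) % (k+1) = p := by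
          rw [heq, show (2*N-1)*N + p - (2*N-1) = (2*N-1)*(N-1) + p by omega,
            Nat.mul_add_mod]
          exact Nat.mod_eq_of_lt (by omega)
        rw [← hcon ((2*N-1)*N + p), hxhigh _ (by omega), hmod, hvgetD p (by omega),
          haM p (by omega), Nat.sub_self]
      obtain ⟨m, hm, hmlow⟩ : ∃ m, (x m ≠ a m) ∧ ∀ t, t < m → x t = a t :=
        ⟨Nat.find hne, Nat.find_spec hne, fun t ht => by simpa using Nat.find_min hne ht⟩
      have hmge : k + 1 ≤ m := by
        by_contra h
        exact hm (hxlow m (by omega))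
      have hrm : (m - (k+1)) % (k+1) < k + 1 := Nat.mod_lt _ (by omega)
      rcases Nat.lt_or_ge ((m - (k+1)) % (k+1)) k with hr | hr
      · -- the first difference sees a 0 in x
        have hxm : x m = 0 := by
          rw [hxhigh m hmge, hv0 _ hr]
        refine ⟨m, hmlow, ?_⟩
        rw [hxm]
        rcases Nat.eq_zero_or_pos (a m) with h0 | h0
        · exact absurd (hxm.trans h0.symm) hm
        · exact h0
      · -- the first difference sees a 1 in x
        have hreq : (m - (k+1)) % (k+1) = k := by omega
        have hxm : x m = 1 := by
          rw [hxhigh m hmge, hreq, hv1]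
        rcases Nat.lt_or_ge 1 (a m) with ham | ham
        · exact ⟨m, hmlow, by rw [hxm]; exact ham⟩
        · -- a m = 0 : contradiction with the block condition
          exfalso
          have ham0 : a m = 0 := by
            have h1 : a m ≠ 1 := fun h => hm (by rw [hxm, h])
            omega
          have hmod_le : (m - (k+1)) % (k+1) ≤ m - (k+1) := Nat.mod_le _ _
          have hmbig : 2*(k+1) - 1 ≤ m := by omega
          obtain ⟨d, hd⟩ : ∃ d, m - (k+1) = (k+1)*d + k := by
            refine ⟨(m - (k+1))/(k+1), ?_⟩
            conv_lhs => rw [← Nat.div_add_mod (m - (k+1)) (k+1)]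
            rw [hreq]
          have azero : ∀ t, m - k ≤ t → t ≤ m → a t = 0 := by
            intro t h1 h2
            rcases Nat.eq_or_lt_of_le h2 with heq' | h3
            · rw [heq']; exact ham0
            · rw [← hmlow t h3, hxhigh t (by omega)]
              have ht1 : t - (k+1) = (k+1)*d + (k - (m - t)) := by omega
              rw [ht1, Nat.mul_add_mod, Nat.mod_eq_of_lt (by omega)]
              exact hv0 _ (by omega)
          obtain ⟨s, hs2, hsl, hsr⟩ := exmult (m - k) (by omega)
          obtain ⟨p, hp, hap⟩ := hblk0 s hs2
          exact hap (azero (s*N + p) (by omega) (by omega))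
    · -- case j ≥ 2N : then j ≥ 2N+1 since a_{2N} = 0 would contradict hja
      have hj2N : 2*N + 1 ≤ k + 1 := by
        by_contra h
        have hk2 : k = 2*N - 1 := by omega
        rw [hk2, ha0] at hja'
        omega
      obtain ⟨i0, hi0, hne0⟩ := star0 (k+1) (by omega)
      have hex : ∃ i, a ((k+1) + i) ≠ 0 := ⟨i0, hne0⟩
      obtain ⟨i, hi, hspec, hmin⟩ :
          ∃ i, i ≤ 2*N-2 ∧ a ((k+1)+i) ≠ 0 ∧ ∀ t, t < i → a ((k+1)+t) = 0 :=
        ⟨Nat.find hex, le_trans (Nat.find_min' hex hne0) hi0, Nat.find_spec hex,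
          fun t ht => by simpa using Nat.find_min hex ht⟩
      refine ⟨(k+1) + i, ?_, ?_⟩
      · intro t ht
        rcases Nat.lt_or_ge t (k+1) with h | h
        · exact hxlow t h
        · have hu : t - (k+1) < i := by omega
          have h0 : a ((k+1) + (t - (k+1))) = 0 := hmin _ hu
          rw [show (k+1) + (t - (k+1)) = t by omega] at h0
          rw [hxhigh t h, Nat.mod_eq_of_lt (by omega), hvgetD _ (by omega),
            haM (t - (k+1)) (by omega), Nat.sub_self, h0]
      · rw [hxhigh ((k+1)+i) (by omega), show (k+1)+i - (k+1) = i by omega,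
          Nat.mod_eq_of_lt (by omega), hvgetD i (by omega), haM i (by omega), Nat.sub_self]
        exact Nat.pos_of_ne_zero hspec
  exact ⟨fun n hn => ⟨G1 n hn, G2 n hn⟩, hV, hIrr⟩

end Paper
end
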